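/- arXiv:2205.15499 — 6 statements merged into one kernel-verified Lean document; each statement's English description precedes it below -/
import Mathlib

section
/- Assume the integrability condition ∫₁^∞ log(1+z) μ(dz) + ∫₁^∞ log(1+z) ν(dz) < ∞, and set V_log(x) = log(1+x). Then for every x ≥ 0 the integrals in LV_log(x) = −c/(1+x)² + x∫₀^∞[log(1+z/(1+x)) − (z/(1+x))1_{z≤1}]μ(dz) + (β − bx − g(x))/(1+x) + ∫₀^∞ log(1+z/(1+x))ν(dz) converge, and the following are equivalent: (i) V_log is a Lyapunov function, i.e. there exist constants C₀ > 0 and C₁ > 0 such that LV_log(x) ≤ C₀ − C₁ log(1+x) for all x ≥ 0; (ii) liminf_{x→∞} { g(x)/(x log x) − (x/log x)∫₁^∞ log(1 + z/(1+x)) μ(dz) } > 0. -/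
/-!
Write `u = z / (1 + x)`. Near the origin the compensated integrand `log (1 + u) - u` is `O(u²)`,
so the small jumps of `μ` contribute a bounded amount to `x ∫ …`; the drift and immigration terms
are bounded as well. Hence `LV_log(x) = x I(x) - g(x) / (1 + x) + O(1)`, where
`I(x) = ∫_{z > 1} log (1 + u) μ(dz)` lies between `0` and `∫_{z > 1} log (1 + z) μ(dz)`.
It remains to compare `g(x) / (1 + x) - x I(x) ≥ C₁ log (1 + x) - D` with the liminf condition,
which after multiplying by `log x` reads `g(x) / x - x I(x) ≥ ε log x` for large `x`; the two
differ by the factor `x / (1 + x) ∈ [1/2, 1]` and an error of at most `I(x)`.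
-/

open MeasureTheory Filter Set Real

noncomputable section

def compensatedLogJump (x z : ℝ) : ℝ :=
  log (1 + z / (1 + x)) - (z / (1 + x)) * (if z ≤ 1 then 1 else 0)

def generatorVlog (b c β : ℝ) (μ ν : Measure ℝ) (g : ℝ → ℝ) (x : ℝ) : ℝ :=
  -c / (1 + x) ^ 2 + x * (∫ z in Ioi 0, compensatedLogJump x z ∂μ) + (β - b * x - g x) / (1 + x)
    + ∫ z in Ioi 0, log (1 + z / (1 + x)) ∂ν

def largeJumpLog (μ : Measure ℝ) (x : ℝ) : ℝ :=
  ∫ z in Ioi 1, log (1 + z / (1 + x)) ∂μ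

end

variable {μ ν : Measure ℝ} {s : Set ℝ} {x z : ℝ}

lemma integrableOn_of_setLIntegral_ofReal_lt_top {f : ℝ → ℝ} (hf : Measurable f)
    (hs : MeasurableSet s) (hf₀ : ∀ z ∈ s, 0 ≤ f z)
    (h : ∫⁻ z in s, ENNReal.ofReal (f z) ∂μ < ⊤) : IntegrableOn f s μ :=
  (lintegral_ofReal_ne_top_iff_integrable hf.aestronglyMeasurable
    (ae_restrict_of_forall_mem hs hf₀)).1 h.ne

lemma integrableOn_of_lintegral_ofReal_min_lt_top {f : ℝ → ℝ} (hf : Measurable f)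
    (hs : MeasurableSet s) (hf₀₁ : ∀ z ∈ s, 0 ≤ f z ∧ f z ≤ 1)
    (h : ∫⁻ z, ENNReal.ofReal (min 1 (f z)) ∂μ < ⊤) : IntegrableOn f s μ :=
  (integrableOn_of_setLIntegral_ofReal_lt_top (by fun_prop) hs
    (fun z hz => le_min zero_le_one (hf₀₁ z hz).1) ((setLIntegral_le_lintegral _ _).trans_lt h)
    ).congr_fun (fun z hz => min_eq_right (hf₀₁ z hz).2) hs

lemma abs_log_one_add_sub_self_le_sq {u : ℝ} (hu : 0 ≤ u) : |log (1 + u) - u| ≤ u ^ 2 := by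
  have hu₁ : 0 < 1 + u := by linarith
  have hupper := log_le_sub_one_of_pos hu₁
  have hlower := one_sub_inv_le_log_of_pos hu₁
  have hinv : 1 - (1 + u)⁻¹ = u - u ^ 2 + u ^ 3 / (1 + u) := by field_simp; ring
  have hcube : 0 ≤ u ^ 3 / (1 + u) := by positivity
  rw [abs_le]
  constructor <;> nlinarith

lemma log_one_add_div_nonneg (hz : 0 ≤ z) (hx : 0 ≤ x) : 0 ≤ log (1 + z / (1 + x)) :=
  log_nonneg (le_add_of_nonneg_right (by positivity))

lemma log_one_add_div_le (hz : 0 ≤ z) (hx : 0 ≤ x) : log (1 + z / (1 + x)) ≤ log (1 + z) :=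
  log_le_log (by positivity) (by gcongr; exact div_le_self hz (by linarith))

lemma integrableOn_log_one_add_div (hs : MeasurableSet s) (hs₀ : s ⊆ Ici 0)
    (h : IntegrableOn (fun z => log (1 + z)) s μ) (hx : 0 ≤ x) :
    IntegrableOn (fun z => log (1 + z / (1 + x))) s μ :=
  h.mono' (by fun_prop : Measurable fun z => log (1 + z / (1 + x))).aestronglyMeasurable <|
    ae_restrict_of_forall_mem hs fun z hz => by
    rw [norm_of_nonneg (log_one_add_div_nonneg (hs₀ hz) hx)]
    exact log_one_add_div_le (hs₀ hz) hx

lemma setIntegral_log_one_add_div_nonneg (hs : MeasurableSet s) (hs₀ : s ⊆ Ici 0) (hx : 0 ≤ x) :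
    0 ≤ ∫ z in s, log (1 + z / (1 + x)) ∂μ :=
  setIntegral_nonneg hs fun _ hz => log_one_add_div_nonneg (hs₀ hz) hx

lemma setIntegral_log_one_add_div_le (hs : MeasurableSet s) (hs₀ : s ⊆ Ici 0)
    (h : IntegrableOn (fun z => log (1 + z)) s μ) (hx : 0 ≤ x) :
    ∫ z in s, log (1 + z / (1 + x)) ∂μ ≤ ∫ z in s, log (1 + z) ∂μ :=
  setIntegral_mono_on (integrableOn_log_one_add_div hs hs₀ h hx) h hs
    fun _ hz => log_one_add_div_le (hs₀ hz) hx

lemma integrableOn_log_one_add_Ioi_zero (h₀ : IntegrableOn (fun z => z) (Ioc 0 1) μ)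
    (h₁ : IntegrableOn (fun z => log (1 + z)) (Ioi 1) μ) :
    IntegrableOn (fun z => log (1 + z)) (Ioi 0) μ := by
  rw [← Ioc_union_Ioi_eq_Ioi zero_le_one]
  have hmeas : Measurable fun z => log (1 + z) := by fun_prop
  refine IntegrableOn.union (h₀.mono' hmeas.aestronglyMeasurable <|
    ae_restrict_of_forall_mem measurableSet_Ioc fun z hz => ?_) h₁
  have hz₁ : 1 ≤ 1 + z := by linarith [hz.1]
  rw [norm_of_nonneg (log_nonneg hz₁)]
  linarith [log_le_sub_one_of_pos (zero_lt_one.trans_le hz₁)]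

lemma measurable_compensatedLogJump : Measurable (compensatedLogJump x) :=
  (by fun_prop : Measurable fun z => log (1 + z / (1 + x))).sub <|
    (measurable_id.div_const _).mul
      (Measurable.ite measurableSet_Iic measurable_const measurable_const)

lemma compensatedLogJump_of_one_lt (hz : 1 < z) :
    compensatedLogJump x z = log (1 + z / (1 + x)) := by
  simp [compensatedLogJump, not_le.2 hz]

lemma one_add_mul_abs_compensatedLogJump_le (hx : 0 ≤ x) (hz : z ∈ Ioc (0 : ℝ) 1) :
    (1 + x) * |compensatedLogJump x z| ≤ z ^ 2 := by
  have hx₁ : 0 < 1 + x := by linarith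
  rw [compensatedLogJump, if_pos hz.2, mul_one]
  calc (1 + x) * |log (1 + z / (1 + x)) - z / (1 + x)|
      ≤ (1 + x) * (z / (1 + x)) ^ 2 := by
        gcongr; exact abs_log_one_add_sub_self_le_sq (div_nonneg hz.1.le hx₁.le)
    _ = z ^ 2 / (1 + x) := by field_simp
    _ ≤ z ^ 2 := div_le_self (sq_nonneg z) (by linarith)

lemma integrableOn_compensatedLogJump_Ioc (h : IntegrableOn (fun z => z ^ 2) (Ioc 0 1) μ)
    (hx : 0 ≤ x) : IntegrableOn (compensatedLogJump x) (Ioc 0 1) μ :=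
  h.mono' measurable_compensatedLogJump.aestronglyMeasurable <|
    ae_restrict_of_forall_mem measurableSet_Ioc fun z hz =>
      (le_mul_of_one_le_left (abs_nonneg _) (by linarith)).trans
        (one_add_mul_abs_compensatedLogJump_le hx hz)

lemma integrableOn_compensatedLogJump_Ioi_one
    (h : IntegrableOn (fun z => log (1 + z)) (Ioi 1) μ) (hx : 0 ≤ x) :
    IntegrableOn (compensatedLogJump x) (Ioi 1) μ :=
  (integrableOn_log_one_add_div measurableSet_Ioi (Ioi_subset_Ici zero_le_one) h hx).congr_fun
    (fun _ hz => (compensatedLogJump_of_one_lt hz).symm) measurableSet_Ioi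

lemma integrableOn_compensatedLogJump (h₀ : IntegrableOn (fun z => z ^ 2) (Ioc 0 1) μ)
    (h₁ : IntegrableOn (fun z => log (1 + z)) (Ioi 1) μ) (hx : 0 ≤ x) :
    IntegrableOn (compensatedLogJump x) (Ioi 0) μ := by
  rw [← Ioc_union_Ioi_eq_Ioi zero_le_one]
  exact (integrableOn_compensatedLogJump_Ioc h₀ hx).union
    (integrableOn_compensatedLogJump_Ioi_one h₁ hx)

lemma setIntegral_compensatedLogJump_Ioi_zero (h₀ : IntegrableOn (fun z => z ^ 2) (Ioc 0 1) μ)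
    (h₁ : IntegrableOn (fun z => log (1 + z)) (Ioi 1) μ) (hx : 0 ≤ x) :
    ∫ z in Ioi 0, compensatedLogJump x z ∂μ
      = (∫ z in Ioc 0 1, compensatedLogJump x z ∂μ) + largeJumpLog μ x := by
  rw [← Ioc_union_Ioi_eq_Ioi zero_le_one, setIntegral_union (Ioc_disjoint_Ioi le_rfl)
    measurableSet_Ioi (integrableOn_compensatedLogJump_Ioc h₀ hx)
    (integrableOn_compensatedLogJump_Ioi_one h₁ hx), largeJumpLog,
    setIntegral_congr_fun measurableSet_Ioi fun _ hz => compensatedLogJump_of_one_lt hz]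

lemma abs_mul_setIntegral_compensatedLogJump_Ioc_le
    (h : IntegrableOn (fun z => z ^ 2) (Ioc 0 1) μ) (hx : 0 ≤ x) :
    |x * ∫ z in Ioc 0 1, compensatedLogJump x z ∂μ| ≤ ∫ z in Ioc 0 1, z ^ 2 ∂μ := by
  rw [← integral_const_mul, ← norm_eq_abs]
  refine norm_integral_le_of_norm_le h <| ae_restrict_of_forall_mem measurableSet_Ioc fun z hz => ?_
  rw [norm_mul, norm_of_nonneg hx, norm_eq_abs]
  exact (mul_le_mul_of_nonneg_right (by linarith) (abs_nonneg _)).trans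
    (one_add_mul_abs_compensatedLogJump_le hx hz)

lemma largeJumpLog_nonneg (hx : 0 ≤ x) : 0 ≤ largeJumpLog μ x :=
  setIntegral_log_one_add_div_nonneg measurableSet_Ioi (Ioi_subset_Ici zero_le_one) hx

lemma largeJumpLog_le (h : IntegrableOn (fun z => log (1 + z)) (Ioi 1) μ) (hx : 0 ≤ x) :
    largeJumpLog μ x ≤ ∫ z in Ioi 1, log (1 + z) ∂μ :=
  setIntegral_log_one_add_div_le measurableSet_Ioi (Ioi_subset_Ici zero_le_one) h hx

lemma abs_generatorVlog_add_le (b c β : ℝ) (g : ℝ → ℝ)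
    (hμ₀ : IntegrableOn (fun z => z ^ 2) (Ioc 0 1) μ)
    (hμ₁ : IntegrableOn (fun z => log (1 + z)) (Ioi 1) μ)
    (hν : IntegrableOn (fun z => log (1 + z)) (Ioi 0) ν) (hx : 0 ≤ x) :
    |generatorVlog b c β μ ν g x + (g x / (1 + x) - x * largeJumpLog μ x)|
      ≤ |c| + ∫ z in Ioc 0 1, z ^ 2 ∂μ + (|β| + |b|) + ∫ z in Ioi 0, log (1 + z) ∂ν := by
  have hx₁ : 0 < 1 + x := by linarith
  have hdiffusion : |-c / (1 + x) ^ 2| ≤ |c| := by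
    rw [abs_div, abs_neg, abs_of_pos (pow_pos hx₁ 2)]
    exact div_le_self (abs_nonneg c) (one_le_pow₀ (by linarith))
  have hdrift : |(β - b * x) / (1 + x)| ≤ |β| + |b| := by
    rw [abs_div, abs_of_pos hx₁, div_le_iff₀ hx₁]
    calc |β - b * x| ≤ |β| + |b| * x := by
          simpa [abs_mul, abs_of_nonneg hx] using abs_sub β (b * x)
      _ ≤ (|β| + |b|) * (1 + x) := by nlinarith [abs_nonneg β, abs_nonneg b]
  have himmigration : |∫ z in Ioi 0, log (1 + z / (1 + x)) ∂ν| ≤ ∫ z in Ioi 0, log (1 + z) ∂ν := by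
    rw [abs_of_nonneg (setIntegral_log_one_add_div_nonneg measurableSet_Ioi Ioi_subset_Ici_self hx)]
    exact setIntegral_log_one_add_div_le measurableSet_Ioi Ioi_subset_Ici_self hν hx
  have hsplit : generatorVlog b c β μ ν g x + (g x / (1 + x) - x * largeJumpLog μ x)
      = -c / (1 + x) ^ 2 + x * (∫ z in Ioc 0 1, compensatedLogJump x z ∂μ)
        + (β - b * x) / (1 + x) + ∫ z in Ioi 0, log (1 + z / (1 + x)) ∂ν := by
    rw [generatorVlog, setIntegral_compensatedLogJump_Ioi_zero hμ₀ hμ₁ hx]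
    ring
  rw [hsplit]
  refine (abs_add_le _ _).trans (add_le_add ((abs_add_le _ _).trans (add_le_add
    ((abs_add_le _ _).trans (add_le_add hdiffusion ?_)) hdrift)) himmigration)
  exact abs_mul_setIntegral_compensatedLogJump_Ioc_le hμ₀ hx

lemma lyapunov_iff_of_abs_add_le {L h : ℝ → ℝ} {K : ℝ} (hLh : ∀ x, 0 ≤ x → |L x + h x| ≤ K) :
    (∃ C₀ > (0 : ℝ), ∃ C₁ > (0 : ℝ), ∀ x : ℝ, 0 ≤ x → L x ≤ C₀ - C₁ * log (1 + x)) ↔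
      ∃ C₁ > (0 : ℝ), ∃ D : ℝ, ∀ x : ℝ, 0 ≤ x → C₁ * log (1 + x) - D ≤ h x := by
  constructor
  · rintro ⟨C₀, -, C₁, hC₁, hL⟩
    refine ⟨C₁, hC₁, C₀ + K, fun x hx => ?_⟩
    linarith [hL x hx, (abs_le.1 (hLh x hx)).1]
  · rintro ⟨C₁, hC₁, D, hh⟩
    refine ⟨max (D + K) 1, lt_max_of_lt_right one_pos, C₁, hC₁, fun x hx => ?_⟩
    linarith [hh x hx, (abs_le.1 (hLh x hx)).2, le_max_left (D + K) 1]

lemma zero_lt_liminf_coe_iff {α : Type*} {l : Filter α} {f : α → ℝ} :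
    (0 : EReal) < liminf (fun a => (f a : EReal)) l ↔ ∃ ε > (0 : ℝ), ∀ᶠ a in l, ε ≤ f a := by
  constructor
  · intro h
    obtain ⟨ε, hε, hεf⟩ := EReal.lt_iff_exists_real_btwn.1 h
    exact ⟨ε, EReal.coe_pos.1 hε,
      (eventually_lt_of_lt_liminf hεf).mono fun a ha => (EReal.coe_lt_coe_iff.1 ha).le⟩
  · rintro ⟨ε, hε, hf⟩
    exact (EReal.coe_pos.2 hε).trans_le <|
      le_liminf_of_le (by isBoundedDefault) (hf.mono fun a ha => EReal.coe_le_coe_iff.2 ha)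

lemma eventually_le_div_log_iff {ε : ℝ} {φ : ℝ → ℝ} :
    (∀ᶠ x in atTop, ε ≤ φ x / log x) ↔ ∀ᶠ x in atTop, ε * log x ≤ φ x :=
  eventually_congr <| (tendsto_log_atTop.eventually_gt_atTop 0).mono fun _ hx => le_div_iff₀ hx

section Growth

variable {G I : ℝ → ℝ}

lemma eventually_mul_log_le_of_forall (hG : ∀ x, 0 ≤ x → 0 ≤ G x) {C₁ D : ℝ} (hC₁ : 0 < C₁)
    (h : ∀ x, 0 ≤ x → C₁ * log (1 + x) - D ≤ G x / (1 + x) - x * I x) :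
    ∀ᶠ x in atTop, C₁ / 2 * log x ≤ G x / x - x * I x := by
  filter_upwards [eventually_gt_atTop 0, tendsto_log_atTop.eventually_ge_atTop (2 * D / C₁)]
    with x hx hD
  have hlog : C₁ * log x ≤ C₁ * log (1 + x) :=
    mul_le_mul_of_nonneg_left (log_le_log hx (by linarith)) hC₁.le
  have hGx : G x / (1 + x) ≤ G x / x := div_le_div_of_nonneg_left (hG x hx.le) hx (by linarith)
  rw [div_le_iff₀ hC₁] at hD
  linarith [h x hx.le]

lemma mul_log_one_add_sub_le (hx : 2 ≤ x) {ε M : ℝ} (hε : 0 ≤ ε) (hI : 0 ≤ I x ∧ I x ≤ M)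
    (h : ε * log x ≤ G x / x - x * I x) :
    ε / 4 * log (1 + x) - M ≤ G x / (1 + x) - x * I x := by
  have hx₀ : 0 < x := by linarith
  have hq_half : 1 / 2 ≤ x / (1 + x) := by rw [le_div_iff₀ (by linarith)]; linarith
  have hq_one : x / (1 + x) ≤ 1 := by rw [div_le_one (by linarith)]; linarith
  have hlog : log (1 + x) ≤ 2 * log x := by
    rw [← Nat.cast_two, ← log_pow]
    exact log_le_log (by linarith) (by nlinarith)
  have hεlog : 0 ≤ ε * log x := mul_nonneg hε (log_nonneg (by linarith))
  calc ε / 4 * log (1 + x) - M ≤ 1 / 2 * (ε * log x) - I x := by nlinarith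
    _ ≤ x / (1 + x) * (G x / x - x * I x) - x / (1 + x) * I x := by
        gcongr ?_ - ?_
        · exact mul_le_mul hq_half h hεlog (by positivity)
        · exact mul_le_of_le_one_left hI.1 hq_one
    _ = G x / (1 + x) - x * I x := by field_simp; ring

lemma exists_forall_mul_log_le_of_eventually (hG : ∀ x, 0 ≤ x → 0 ≤ G x) {M : ℝ}
    (hI : ∀ x, 0 ≤ x → 0 ≤ I x ∧ I x ≤ M) {ε : ℝ} (hε : 0 < ε)
    (h : ∀ᶠ x in atTop, ε * log x ≤ G x / x - x * I x) :
    ∃ D : ℝ, ∀ x, 0 ≤ x → ε / 4 * log (1 + x) - D ≤ G x / (1 + x) - x * I x := by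
  obtain ⟨X, hX⟩ := eventually_atTop.1 (h.and (eventually_ge_atTop 2))
  have hX₂ : 2 ≤ X := (hX X le_rfl).2
  have hM : 0 ≤ M := (hI 0 le_rfl).1.trans (hI 0 le_rfl).2
  refine ⟨ε / 4 * log (1 + X) + X * M + M, fun x hx => ?_⟩
  rcases le_total X x with hXx | hxX
  · have hlogX : 0 ≤ ε / 4 * log (1 + X) := by
      have := log_nonneg (by linarith : (1 : ℝ) ≤ 1 + X)
      positivity
    linarith [mul_log_one_add_sub_le (hX x hXx).2 hε.le (hI x hx) (hX x hXx).1,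
      mul_nonneg (by linarith : (0 : ℝ) ≤ X) hM]
  · have hlog : ε / 4 * log (1 + x) ≤ ε / 4 * log (1 + X) := by gcongr
    have hxI : x * I x ≤ X * M := mul_le_mul hxX (hI x hx).2 (hI x hx).1 (by linarith)
    have hGx : 0 ≤ G x / (1 + x) := div_nonneg (hG x hx) (by linarith)
    linarith

theorem exists_mul_log_le_iff_zero_lt_liminf (hG : ∀ x, 0 ≤ x → 0 ≤ G x) {M : ℝ}
    (hI : ∀ x, 0 ≤ x → 0 ≤ I x ∧ I x ≤ M) :
    (∃ C₁ > (0 : ℝ), ∃ D : ℝ, ∀ x : ℝ, 0 ≤ x → C₁ * log (1 + x) - D ≤ G x / (1 + x) - x * I x) ↔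
      (0 : EReal) < liminf
        (fun x : ℝ => ((G x / (x * log x) - (x / log x) * I x : ℝ) : EReal)) atTop := by
  have hφ : ∀ x : ℝ, G x / (x * log x) - x / log x * I x = (G x / x - x * I x) / log x :=
    fun x => by ring
  simp only [hφ, zero_lt_liminf_coe_iff, eventually_le_div_log_iff]
  constructor
  · rintro ⟨C₁, hC₁, D, h⟩
    exact ⟨C₁ / 2, by positivity, eventually_mul_log_le_of_forall hG hC₁ h⟩
  · rintro ⟨ε, hε, h⟩
    obtain ⟨D, hD⟩ := exists_forall_mul_log_le_of_eventually hG hI hε h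
    exact ⟨ε / 4, by positivity, D, hD⟩

end Growth

theorem lyapunov_Vlog_iff_general
    (b c β : ℝ)
    (μ ν : MeasureTheory.Measure ℝ)
    (hμloc : ∫⁻ z, ENNReal.ofReal (min 1 (z ^ 2)) ∂μ < ⊤)
    (hνloc : ∫⁻ z, ENNReal.ofReal (min 1 z) ∂ν < ⊤)
    (g : ℝ → ℝ) (hgnonneg : ∀ x ∈ Set.Ici (0 : ℝ), 0 ≤ g x)
    (hμlog : ∫⁻ z in Set.Ioi (1 : ℝ), ENNReal.ofReal (Real.log (1 + z)) ∂μ < ⊤)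
    (hνlog : ∫⁻ z in Set.Ioi (1 : ℝ), ENNReal.ofReal (Real.log (1 + z)) ∂ν < ⊤) :
    (∀ x : ℝ, 0 ≤ x →
        MeasureTheory.IntegrableOn
          (fun z => Real.log (1 + z / (1 + x)) - (z / (1 + x)) * (if z ≤ 1 then 1 else 0))
          (Set.Ioi 0) μ ∧
        MeasureTheory.IntegrableOn (fun z => Real.log (1 + z / (1 + x))) (Set.Ioi 0) ν) ∧
    ((∃ C₀ > (0 : ℝ), ∃ C₁ > (0 : ℝ), ∀ x : ℝ, 0 ≤ x →
        -c / (1 + x) ^ 2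
            + x * (∫ z in Set.Ioi (0 : ℝ),
                (Real.log (1 + z / (1 + x)) - (z / (1 + x)) * (if z ≤ 1 then 1 else 0)) ∂μ)
            + (β - b * x - g x) / (1 + x)
            + (∫ z in Set.Ioi (0 : ℝ), Real.log (1 + z / (1 + x)) ∂ν)
          ≤ C₀ - C₁ * Real.log (1 + x))
      ↔ (0 : EReal) < Filter.liminf
          (fun x : ℝ => ((g x / (x * Real.log x)
            - (x / Real.log x) * ∫ z in Set.Ioi (1 : ℝ), Real.log (1 + z / (1 + x)) ∂μ : ℝ) : EReal))
          Filter.atTop) := by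
  have hμ₀ : IntegrableOn (fun z => z ^ 2) (Ioc 0 1) μ :=
    integrableOn_of_lintegral_ofReal_min_lt_top (by fun_prop) measurableSet_Ioc
      (fun z hz => ⟨sq_nonneg z, pow_le_one₀ hz.1.le hz.2⟩) hμloc
  have hμ₁ : IntegrableOn (fun z => log (1 + z)) (Ioi 1) μ :=
    integrableOn_of_setLIntegral_ofReal_lt_top (by fun_prop) measurableSet_Ioi
      (fun z hz => log_nonneg (by linarith [mem_Ioi.1 hz])) hμlog
  have hν : IntegrableOn (fun z => log (1 + z)) (Ioi 0) ν :=
    integrableOn_log_one_add_Ioi_zero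
      (integrableOn_of_lintegral_ofReal_min_lt_top (f := fun z => z) measurable_id
        measurableSet_Ioc (fun _ hz => ⟨hz.1.le, hz.2⟩) hνloc)
      (integrableOn_of_setLIntegral_ofReal_lt_top (by fun_prop) measurableSet_Ioi
        (fun z hz => log_nonneg (by linarith [mem_Ioi.1 hz])) hνlog)
  refine ⟨fun x hx => ⟨integrableOn_compensatedLogJump hμ₀ hμ₁ hx,
    integrableOn_log_one_add_div measurableSet_Ioi Ioi_subset_Ici_self hν hx⟩, ?_⟩
  exact (lyapunov_iff_of_abs_add_le (L := generatorVlog b c β μ ν g)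
    fun x hx => abs_generatorVlog_add_le b c β g hμ₀ hμ₁ hν hx).trans
    (exists_mul_log_le_iff_zero_lt_liminf (I := largeJumpLog μ) hgnonneg
      fun x hx => ⟨largeJumpLog_nonneg hx, largeJumpLog_le hμ₁ hx⟩)

theorem lyapunov_Vlog_iff
    (b c β : ℝ) (hc : 0 ≤ c) (hβ : 0 ≤ β)
    (μ ν : MeasureTheory.Measure ℝ)
    (hμsupp : μ (Set.Iic 0) = 0) (hνsupp : ν (Set.Iic 0) = 0)
    (hμloc : ∫⁻ z, ENNReal.ofReal (min 1 (z ^ 2)) ∂μ < ⊤)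
    (hνloc : ∫⁻ z, ENNReal.ofReal (min 1 z) ∂ν < ⊤)
    (g : ℝ → ℝ) (hg0 : g 0 = 0) (hgmono : MonotoneOn g (Set.Ici 0))
    (hgcont : ContinuousOn g (Set.Ici 0)) (hgnonneg : ∀ x ∈ Set.Ici (0 : ℝ), 0 ≤ g x)
    (hμlog : ∫⁻ z in Set.Ioi (1 : ℝ), ENNReal.ofReal (Real.log (1 + z)) ∂μ < ⊤)
    (hνlog : ∫⁻ z in Set.Ioi (1 : ℝ), ENNReal.ofReal (Real.log (1 + z)) ∂ν < ⊤) :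
    (∀ x : ℝ, 0 ≤ x →
        MeasureTheory.IntegrableOn
          (fun z => Real.log (1 + z / (1 + x)) - (z / (1 + x)) * (if z ≤ 1 then 1 else 0))
          (Set.Ioi 0) μ ∧
        MeasureTheory.IntegrableOn (fun z => Real.log (1 + z / (1 + x))) (Set.Ioi 0) ν) ∧
    ((∃ C₀ > (0 : ℝ), ∃ C₁ > (0 : ℝ), ∀ x : ℝ, 0 ≤ x →
        -c / (1 + x) ^ 2
            + x * (∫ z in Set.Ioi (0 : ℝ),
                (Real.log (1 + z / (1 + x)) - (z / (1 + x)) * (if z ≤ 1 then 1 else 0)) ∂μ)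
            + (β - b * x - g x) / (1 + x)
            + (∫ z in Set.Ioi (0 : ℝ), Real.log (1 + z / (1 + x)) ∂ν)
          ≤ C₀ - C₁ * Real.log (1 + x))
      ↔ (0 : EReal) < Filter.liminf
          (fun x : ℝ => ((g x / (x * Real.log x)
            - (x / Real.log x) * ∫ z in Set.Ioi (1 : ℝ), Real.log (1 + z / (1 + x)) ∂μ : ℝ) : EReal))
          Filter.atTop) :=
  lyapunov_Vlog_iff_general b c β μ ν hμloc hνloc g hgnonneg hμlog hνlog
end

section
/- For any γ, η ∈ P_V([0,∞)), the V-weighted total variation distance coincides with the Wasserstein distance determined by the cost d_V: W_V(γ,η) = ∫₀^∞(1+V(x))|γ−η|(dx) = inf_{π ∈ C(γ,η)} ∫ d_V(x,y) π(dx,dy), where C(γ,η) is the collection of all Borel probability measures on [0,∞)² whose first marginal is γ and second marginal is η; moreover the infimum is attained by some π ∈ C(γ,η). -/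
/-!
By the Hahn decomposition, `γ = γ₀ + (γ - η)` and `η = γ₀ + (η - γ)` with a common part `γ₀`,
and the total variation of `γ - η` is `(γ - η) + (η - γ)`. Off the diagonal the cost `d_V(x, y)` is
`w x + w y` with `w = 1 + V`, so the cost of a coupling `π` is at least `∫ w` against the two
marginals of `π` restricted off the diagonal; these marginals dominate `γ - η` and `η - γ`,
because the diagonal part of `π` has equal marginals bounded by `γ` and by `η`. Equality holds for
the coupling that keeps `γ₀` on the diagonal and transports `γ - η` to `η - γ` by the normalized
product measure, which charges no point of the diagonal as the two parts are mutually singular.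
-/

open MeasureTheory Measure Set
open scoped ENNReal

namespace MeasureTheory

variable {α : Type*} [MeasurableSpace α]

/-- The cost `d_V(x, y) = (w x + w y) 1_{x ≠ y}` of the weight `w = 1 + V`. -/
noncomputable def discreteCost (w : α → ℝ≥0∞) : α × α → ℝ≥0∞ :=
  (diagonal α)ᶜ.indicator fun q => w q.1 + w q.2

lemma lintegral_discreteCost [MeasurableEq α] {w : α → ℝ≥0∞} (hw : Measurable w)
    (π : Measure (α × α)) :
    ∫⁻ q, discreteCost w q ∂π = ∫⁻ x, w x ∂((π.restrict (diagonal α)ᶜ).map Prod.fst)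
      + ∫⁻ x, w x ∂((π.restrict (diagonal α)ᶜ).map Prod.snd) := by
  rw [discreteCost, lintegral_indicator measurableSet_diagonal.compl,
    lintegral_add_left (f := fun q : α × α => w q.1) (hw.comp measurable_fst),
    lintegral_map hw measurable_fst, lintegral_map hw measurable_snd]

lemma map_fst_restrict_diagonal [MeasurableEq α] (π : Measure (α × α)) :
    (π.restrict (diagonal α)).map Prod.fst = (π.restrict (diagonal α)).map Prod.snd :=
  map_congr ((ae_restrict_mem measurableSet_diagonal).mono fun _ hq => hq)

lemma map_fst_le_map_fst_restrict_compl_diagonal_add [MeasurableEq α] (π : Measure (α × α)) :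
    π.map Prod.fst ≤ (π.restrict (diagonal α)ᶜ).map Prod.fst + π.map Prod.snd := by
  conv_lhs => rw [← restrict_add_restrict_compl (μ := π) measurableSet_diagonal]
  rw [Measure.map_add _ _ measurable_fst, map_fst_restrict_diagonal, add_comm]
  exact add_le_add le_rfl (map_mono restrict_le_self measurable_snd)

lemma map_snd_le_map_snd_restrict_compl_diagonal_add [MeasurableEq α] (π : Measure (α × α)) :
    π.map Prod.snd ≤ (π.restrict (diagonal α)ᶜ).map Prod.snd + π.map Prod.fst := by
  conv_lhs => rw [← restrict_add_restrict_compl (μ := π) measurableSet_diagonal]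
  rw [Measure.map_add _ _ measurable_snd, ← map_fst_restrict_diagonal, add_comm]
  exact add_le_add le_rfl (map_mono restrict_le_self measurable_fst)

theorem lintegral_sub_add_sub_le_lintegral_discreteCost [MeasurableEq α] {w : α → ℝ≥0∞}
    (hw : Measurable w) {μ ν : Measure α} {π : Measure (α × α)}
    (hμ : π.map Prod.fst = μ) (hν : π.map Prod.snd = ν) :
    ∫⁻ x, w x ∂(μ - ν + (ν - μ)) ≤ ∫⁻ q, discreteCost w q ∂π := by
  have hμν : μ - ν ≤ (π.restrict (diagonal α)ᶜ).map Prod.fst :=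
    sub_le_of_le_add (hμ ▸ hν ▸ map_fst_le_map_fst_restrict_compl_diagonal_add π)
  have hνμ : ν - μ ≤ (π.restrict (diagonal α)ᶜ).map Prod.snd :=
    sub_le_of_le_add (hμ ▸ hν ▸ map_snd_le_map_snd_restrict_compl_diagonal_add π)
  rw [lintegral_add_measure, lintegral_discreteCost hw]
  exact add_le_add (lintegral_mono' hμν le_rfl) (lintegral_mono' hνμ le_rfl)

lemma IsHahnDecomposition.sub_add_restrict_compl {μ ν : Measure α} [IsFiniteMeasure ν]
    {s : Set α} (hs : IsHahnDecomposition μ ν s) : μ - ν + ν.restrict sᶜ = μ.restrict sᶜ := by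
  have hnull : (μ - ν).restrict s = 0 :=
    restrict_eq_zero.mpr (sub_apply_eq_zero_of_isHahnDecomposition hs)
  rw [← restrict_add_restrict_compl (μ := μ - ν) hs.measurableSet, hnull, zero_add,
    restrict_sub_eq_restrict_sub_restrict hs.measurableSet.compl,
    sub_add_cancel_of_le hs.ge_on_compl]

lemma exists_eq_add_sub_and_eq_add_sub (μ ν : Measure α) [IsFiniteMeasure μ]
    [IsFiniteMeasure ν] : ∃ μ₀ : Measure α, μ = μ₀ + (μ - ν) ∧ ν = μ₀ + (ν - μ) := by
  obtain ⟨s, hs⟩ := exists_isHahnDecomposition μ ν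
  have hνμ := hs.compl.sub_add_restrict_compl
  rw [compl_compl] at hνμ
  refine ⟨μ.restrict s + ν.restrict sᶜ, ?_, ?_⟩
  · conv_lhs => rw [← restrict_add_restrict_compl (μ := μ) hs.measurableSet]
    rw [← hs.sub_add_restrict_compl]
    ac_rfl
  · conv_lhs => rw [← restrict_add_restrict_compl (μ := ν) hs.measurableSet]
    rw [← hνμ]
    ac_rfl

lemma measure_univ_sub_eq_measure_univ_sub {μ ν : Measure α} [IsFiniteMeasure μ]
    [IsFiniteMeasure ν] (h : μ univ = ν univ) : (μ - ν) univ = (ν - μ) univ := by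
  obtain ⟨μ₀, hμ, hν⟩ := exists_eq_add_sub_and_eq_add_sub μ ν
  have hμ₀ : μ₀ univ ≠ ∞ := by
    have hμ_fin := measure_ne_top μ univ
    rw [hμ, add_apply] at hμ_fin
    exact (ENNReal.add_ne_top.mp hμ_fin).1
  refine (ENNReal.add_right_inj hμ₀).mp ?_
  rw [← add_apply, ← add_apply, ← hμ, ← hν, h]

lemma Measure.MutuallySingular.prod_diagonal_eq_zero {p n : Measure α} [SFinite n]
    (h : p ⟂ₘ n) : p.prod n (diagonal α) = 0 := by
  obtain ⟨t, -, hpt, hnt⟩ := h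
  refine measure_mono_null (t := t ×ˢ univ ∪ univ ×ˢ tᶜ) ?_
    (measure_union_null (by simp [hpt]) (by simp [hnt]))
  rintro ⟨x, y⟩ (rfl : x = y)
  by_cases hx : x ∈ t
  · exact .inl ⟨hx, trivial⟩
  · exact .inr ⟨trivial, hx⟩

lemma map_fst_inv_smul_prod {p n : Measure α} [IsFiniteMeasure p] [SFinite n]
    (h : p univ = n univ) :
    ((p univ)⁻¹ • p.prod n).map Prod.fst = p := by
  rw [Measure.map_smul, map_fst_prod, smul_smul, ← h]
  rcases eq_or_ne p 0 with rfl | hp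
  · simp
  · rw [ENNReal.inv_mul_cancel (by simpa using hp) (measure_ne_top p univ), one_smul]

lemma map_snd_inv_smul_prod {p n : Measure α} [SFinite p] [IsFiniteMeasure n]
    (h : p univ = n univ) :
    ((p univ)⁻¹ • p.prod n).map Prod.snd = n := by
  rw [Measure.map_smul, map_snd_prod, smul_smul, h]
  rcases eq_or_ne n 0 with rfl | hn
  · simp
  · rw [ENNReal.inv_mul_cancel (by simpa using hn) (measure_ne_top n univ), one_smul]

theorem exists_coupling_lintegral_discreteCost_eq [MeasurableEq α] {w : α → ℝ≥0∞}
    (hw : Measurable w) (μ ν : Measure α) [IsFiniteMeasure μ] [IsFiniteMeasure ν]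
    (h : μ univ = ν univ) :
    ∃ π : Measure (α × α), π.map Prod.fst = μ ∧ π.map Prod.snd = ν ∧
      ∫⁻ q, discreteCost w q ∂π = ∫⁻ x, w x ∂(μ - ν + (ν - μ)) := by
  obtain ⟨μ₀, hμ, hν⟩ := exists_eq_add_sub_and_eq_add_sub μ ν
  have hmass := measure_univ_sub_eq_measure_univ_sub h
  have hdiag : Measurable fun x : α => (x, x) := measurable_id.prodMk measurable_id
  set π₁ := ((μ - ν) univ)⁻¹ • (μ - ν).prod (ν - μ)
  have hπ₁ : π₁ (diagonal α) = 0 := by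
    simp [π₁, mutually_singular_measure_sub.prod_diagonal_eq_zero]
  refine ⟨μ₀.map (fun x => (x, x)) + π₁, ?_, ?_, ?_⟩
  · rw [Measure.map_add _ _ measurable_fst, map_map measurable_fst hdiag,
      map_fst_inv_smul_prod hmass, show (Prod.fst ∘ fun x : α => (x, x)) = id from rfl, map_id]
    exact hμ.symm
  · rw [Measure.map_add _ _ measurable_snd, map_map measurable_snd hdiag,
      map_snd_inv_smul_prod hmass, show (Prod.snd ∘ fun x : α => (x, x)) = id from rfl, map_id]
    exact hν.symm
  · have hoff : (μ₀.map (fun x => (x, x)) + π₁).restrict (diagonal α)ᶜ = π₁ := by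
      rw [restrict_add,
        restrict_eq_self_of_ae_mem (s := (diagonal α)ᶜ) (measure_eq_zero_iff_ae_notMem.mp hπ₁),
        restrict_eq_zero.mpr (by
          rw [map_apply hdiag measurableSet_diagonal.compl]
          exact measure_mono_null (fun x hx => hx rfl) measure_empty), zero_add]
    rw [lintegral_discreteCost hw, hoff, map_fst_inv_smul_prod hmass,
      map_snd_inv_smul_prod hmass, lintegral_add_measure]

theorem totalVariation_toSignedMeasure_sub (μ ν : Measure α) [IsFiniteMeasure μ]
    [IsFiniteMeasure ν] :
    (μ.toSignedMeasure - ν.toSignedMeasure).totalVariation = μ - ν + (ν - μ) := by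
  rw [SignedMeasure.totalVariation, toJordanDecomposition_toSignedMeasure_sub]
  rfl

end MeasureTheory

theorem weighted_TV_eq_wasserstein_general
    (V : ℝ → ℝ) (hV : Measurable V) (hVnonneg : ∀ x, 0 ≤ V x)
    (γ η : Measure ℝ) [IsProbabilityMeasure γ] [IsProbabilityMeasure η] :
    ∃ π : Measure (ℝ × ℝ), IsProbabilityMeasure π ∧
      π.map Prod.fst = γ ∧ π.map Prod.snd = η ∧
      (∫⁻ p : ℝ × ℝ, ENNReal.ofReal (if p.1 = p.2 then 0 else 2 + V p.1 + V p.2) ∂π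
        = ∫⁻ x, ENNReal.ofReal (1 + V x)
            ∂((γ.toSignedMeasure - η.toSignedMeasure).totalVariation)) ∧
      ∀ π' : Measure (ℝ × ℝ), IsProbabilityMeasure π' →
        π'.map Prod.fst = γ → π'.map Prod.snd = η →
        (∫⁻ x, ENNReal.ofReal (1 + V x)
            ∂((γ.toSignedMeasure - η.toSignedMeasure).totalVariation))
          ≤ ∫⁻ p : ℝ × ℝ, ENNReal.ofReal (if p.1 = p.2 then 0 else 2 + V p.1 + V p.2) ∂π' := by
  set w : ℝ → ℝ≥0∞ := fun x => ENNReal.ofReal (1 + V x)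
  have hw : Measurable w := ENNReal.measurable_ofReal.comp (measurable_const.add hV)
  have hcost : (fun p : ℝ × ℝ => ENNReal.ofReal (if p.1 = p.2 then 0 else 2 + V p.1 + V p.2))
      = discreteCost w := by
    funext p
    by_cases hp : p.1 = p.2
    · simp [discreteCost, hp]
    · rw [discreteCost, indicator_of_mem (show p ∈ (diagonal ℝ)ᶜ from hp), if_neg hp,
        ← ENNReal.ofReal_add (by linarith [hVnonneg p.1]) (by linarith [hVnonneg p.2])]
      ring_nf
  rw [hcost, totalVariation_toSignedMeasure_sub]
  obtain ⟨π, hfst, hsnd, hπ⟩ := exists_coupling_lintegral_discreteCost_eq hw γ η (by simp)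
  have : IsProbabilityMeasure (π.map Prod.fst) := hfst ▸ inferInstance
  exact ⟨π, isProbabilityMeasure_of_map Prod.fst, hfst, hsnd, hπ,
    fun π' _ hfst' hsnd' => lintegral_sub_add_sub_le_lintegral_discreteCost hw hfst' hsnd'⟩

theorem weighted_TV_eq_wasserstein
    (V : ℝ → ℝ) (hV : Measurable V) (hVnonneg : ∀ x, 0 ≤ V x)
    (γ η : Measure ℝ) [IsProbabilityMeasure γ] [IsProbabilityMeasure η]
    (hγsupp : γ (Set.Iio 0) = 0) (hηsupp : η (Set.Iio 0) = 0)
    (hγV : Integrable V γ) (hηV : Integrable V η) :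
    ∃ π : Measure (ℝ × ℝ), IsProbabilityMeasure π ∧
      π.map Prod.fst = γ ∧ π.map Prod.snd = η ∧
      (∫⁻ p : ℝ × ℝ, ENNReal.ofReal (if p.1 = p.2 then 0 else 2 + V p.1 + V p.2) ∂π
        = ∫⁻ x, ENNReal.ofReal (1 + V x)
            ∂((γ.toSignedMeasure - η.toSignedMeasure).totalVariation)) ∧
      ∀ π' : Measure (ℝ × ℝ), IsProbabilityMeasure π' →
        π'.map Prod.fst = γ → π'.map Prod.snd = η →
        (∫⁻ x, ENNReal.ofReal (1 + V x)
            ∂((γ.toSignedMeasure - η.toSignedMeasure).totalVariation))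
          ≤ ∫⁻ p : ℝ × ℝ, ENNReal.ofReal (if p.1 = p.2 then 0 else 2 + V p.1 + V p.2) ∂π' :=
  weighted_TV_eq_wasserstein_general V hV hVnonneg γ η
end

section
/- Let r > 0 and 0 ≤ u < v, and let m be a Borel measure on ℝ vanishing on (−∞,0] such that m(A) ≥ r·Leb(A ∩ (u,v)) for every Borel set A. Then for every x with |x| ≤ (v−u)/2 one has (m ∧ T_x m)(ℝ) ≥ r(v−u)/2. In particular, the fluctuation condition '(μ ∧ T_xμ)((0,∞)) + (ν ∧ T_xν)((0,∞)) ≥ κ₀ for all |x| ≤ c₀' is satisfied (with c₀ = (v−u)/2 and κ₀ = r(v−u)/2) whenever μ(dz) or ν(dz) is bounded below by the measure r·1_{(u,v)}(z)dz. -/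
open MeasureTheory Set

/- The lower bound says `r • Leb|_(u,v) ≤ m`, hence `r • Leb|_(u+x,v+x) ≤ T_x m` by translation
invariance of Lebesgue measure, so `r • Leb` restricted to the overlap `(u,v) ∩ (u+x,v+x)` lies
below both `m` and `T_x m`, hence below their infimum. The overlap has length `v - u - |x|`,
which is at least `(v - u)/2` when `|x| ≤ (v - u)/2`. Since `m ∧ T_x m ≤ m` is again carried by
`(0,∞)`, the same bound holds for its mass on `(0,∞)`. -/

lemma smul_restrict_le_of_forall_mul_measure_inter_le {α : Type*} [MeasurableSpace α]
    {μ ν : Measure α} {c : ENNReal} {s : Set α}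
    (h : ∀ A, MeasurableSet A → c * ν (A ∩ s) ≤ μ A) : c • ν.restrict s ≤ μ :=
  Measure.le_iff.mpr fun A hA => by
    simpa only [Measure.smul_apply, Measure.restrict_apply hA, smul_eq_mul] using h A hA

lemma map_add_right_volume_restrict_Ioo (a b x : ℝ) :
    (volume.restrict (Ioo a b)).map (· + x) = volume.restrict (Ioo (a + x) (b + x)) := by
  have h_preimage : (· + x) ⁻¹' Ioo (a + x) (b + x) = Ioo a b := by
    rw [preimage_add_const_Ioo, add_sub_cancel_right, add_sub_cancel_right]
  rw [← h_preimage, ← Measure.restrict_map (measurable_add_const x) measurableSet_Ioo,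
    map_add_right_eq_self]

lemma volume_Ioo_inter_Ioo_add (a b x : ℝ) :
    volume (Ioo a b ∩ Ioo (a + x) (b + x)) = ENNReal.ofReal (b - a - |x|) := by
  rw [Ioo_inter_Ioo, Real.volume_Ioo]
  congr 1
  rcases le_total x 0 with hx | hx
  · rw [max_eq_left (by linarith), min_eq_right (by linarith), abs_of_nonpos hx]
    ring
  · rw [max_eq_right (by linarith), min_eq_left (by linarith), abs_of_nonneg hx]
    ring

lemma smul_volume_restrict_inter_le_inf_map_add {μ : Measure ℝ} {c : ENNReal} {a b : ℝ}
    (h : c • volume.restrict (Ioo a b) ≤ μ) (x : ℝ) :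
    c • volume.restrict (Ioo a b ∩ Ioo (a + x) (b + x)) ≤ μ ⊓ μ.map (· + x) := by
  have h_map : c • volume.restrict (Ioo (a + x) (b + x)) ≤ μ.map (· + x) := by
    rw [← map_add_right_volume_restrict_Ioo, ← Measure.map_smul]
    exact Measure.map_mono h (measurable_add_const x)
  refine le_inf (le_trans ?_ h) (le_trans ?_ h_map) <;> gcongr
  exacts [inter_subset_left, inter_subset_right]

lemma ofReal_mul_le_inf_map_add_univ {μ : Measure ℝ} {r a b : ℝ}
    (h : ∀ A, MeasurableSet A → ENNReal.ofReal r * volume (A ∩ Ioo a b) ≤ μ A) (x : ℝ) :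
    ENNReal.ofReal r * ENNReal.ofReal (b - a - |x|) ≤ (μ ⊓ μ.map (· + x)) univ := by
  have h_le := smul_volume_restrict_inter_le_inf_map_add
    (smul_restrict_le_of_forall_mul_measure_inter_le h) x
  calc ENNReal.ofReal r * ENNReal.ofReal (b - a - |x|)
      = (ENNReal.ofReal r • volume.restrict (Ioo a b ∩ Ioo (a + x) (b + x))) univ := by
        rw [Measure.smul_apply, Measure.restrict_apply_univ, volume_Ioo_inter_Ioo_add,
          smul_eq_mul]
    _ ≤ (μ ⊓ μ.map (· + x)) univ := h_le univ

lemma measure_eq_measure_univ_of_le {α : Type*} [MeasurableSpace α] {μ ρ : Measure α}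
    {s : Set α} (hρ : ρ ≤ μ) (hs : μ sᶜ = 0) : ρ s = ρ univ :=
  measure_congr (ae_eq_univ.mpr (Measure.absolutelyContinuous_of_le hρ hs))

theorem fluctuation_condition_from_lower_bound_general
    (r u v : ℝ)
    (m : Measure ℝ)
    (hmlow : ∀ A : Set ℝ, MeasurableSet A →
      ENNReal.ofReal r * volume (A ∩ Set.Ioo u v) ≤ m A) :
    (∀ x : ℝ, |x| ≤ (v - u) / 2 →
      ENNReal.ofReal (r * (v - u) / 2)
        ≤ (m ⊓ Measure.map (fun z => z + x) m) Set.univ) ∧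
    (∀ μ ν : Measure ℝ,
      μ (Set.Iic 0) = 0 → ν (Set.Iic 0) = 0 →
      ((∀ A : Set ℝ, MeasurableSet A →
          ENNReal.ofReal r * volume (A ∩ Set.Ioo u v) ≤ μ A) ∨
       (∀ A : Set ℝ, MeasurableSet A →
          ENNReal.ofReal r * volume (A ∩ Set.Ioo u v) ≤ ν A)) →
      ∀ x : ℝ, |x| ≤ (v - u) / 2 →
        ENNReal.ofReal (r * (v - u) / 2)
          ≤ (μ ⊓ Measure.map (fun z => z + x) μ) (Set.Ioi 0)
            + (ν ⊓ Measure.map (fun z => z + x) ν) (Set.Ioi 0)) := by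
  have bound : ∀ μ : Measure ℝ, (∀ A : Set ℝ, MeasurableSet A →
      ENNReal.ofReal r * volume (A ∩ Ioo u v) ≤ μ A) → ∀ x : ℝ, |x| ≤ (v - u) / 2 →
      ENNReal.ofReal (r * (v - u) / 2) ≤ (μ ⊓ μ.map (· + x)) univ := by
    intro μ hμ x hx
    calc ENNReal.ofReal (r * (v - u) / 2)
        = ENNReal.ofReal r * ENNReal.ofReal ((v - u) / 2) := by
          rw [mul_div_assoc, ENNReal.ofReal_mul' ((abs_nonneg x).trans hx)]
      _ ≤ ENNReal.ofReal r * ENNReal.ofReal (v - u - |x|) := by gcongr; linarith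
      _ ≤ (μ ⊓ μ.map (· + x)) univ := ofReal_mul_le_inf_map_add_univ hμ x
  have bound_Ioi : ∀ μ : Measure ℝ, μ (Iic 0) = 0 → (∀ A : Set ℝ, MeasurableSet A →
      ENNReal.ofReal r * volume (A ∩ Ioo u v) ≤ μ A) → ∀ x : ℝ, |x| ≤ (v - u) / 2 →
      ENNReal.ofReal (r * (v - u) / 2) ≤ (μ ⊓ μ.map (· + x)) (Ioi 0) := by
    intro μ hμ₀ hμ x hx
    rw [measure_eq_measure_univ_of_le inf_le_left (by rwa [compl_Ioi])]
    exact bound μ hμ x hx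
  refine ⟨bound m hmlow, fun μ ν hμ₀ hν₀ hlow x hx => ?_⟩
  rcases hlow with hμ | hν
  · exact (bound_Ioi μ hμ₀ hμ x hx).trans le_self_add
  · exact (bound_Ioi ν hν₀ hν x hx).trans le_add_self

theorem fluctuation_condition_from_lower_bound
    (r u v : ℝ) (hr : 0 < r) (hu : 0 ≤ u) (huv : u < v)
    (m : Measure ℝ) (hmsupp : m (Set.Iic 0) = 0)
    (hmlow : ∀ A : Set ℝ, MeasurableSet A →
      ENNReal.ofReal r * volume (A ∩ Set.Ioo u v) ≤ m A) :
    (∀ x : ℝ, |x| ≤ (v - u) / 2 →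
      ENNReal.ofReal (r * (v - u) / 2)
        ≤ (m ⊓ Measure.map (fun z => z + x) m) Set.univ) ∧
    (∀ μ ν : Measure ℝ,
      μ (Set.Iic 0) = 0 → ν (Set.Iic 0) = 0 →
      ((∀ A : Set ℝ, MeasurableSet A →
          ENNReal.ofReal r * volume (A ∩ Set.Ioo u v) ≤ μ A) ∨
       (∀ A : Set ℝ, MeasurableSet A →
          ENNReal.ofReal r * volume (A ∩ Set.Ioo u v) ≤ ν A)) →
      ∀ x : ℝ, |x| ≤ (v - u) / 2 →
        ENNReal.ofReal (r * (v - u) / 2)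
          ≤ (μ ⊓ Measure.map (fun z => z + x) μ) (Set.Ioi 0)
            + (ν ⊓ Measure.map (fun z => z + x) ν) (Set.Ioi 0)) :=
  fluctuation_condition_from_lower_bound_general r u v m hmlow
end

section
/- Let σ > 0, β > 0, take b = 0, c = 0, ν = 0, μ(dz) = σ z^{−2} dz and g(x) = σ x log(1+x) in the generator L. Then for V_log(x) = log(1+x) one has LV_log(x) = (σx + β)/(1+x) for all x ≥ 0, so there exists λ > 0 (e.g. λ = min(σ, β)) with LV_log(x) ≥ λ for all x ≥ 0; in particular there are no constants C₀ > 0, C₁ > 0 with LV_log(x) ≤ C₀ − C₁ log(1+x) for all x ≥ 0, i.e. V_log is not a Lyapunov function. -/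
open MeasureTheory

/-- The Lévy measure `μ(dz) = σ z⁻² dz` on `(0,∞)` (Neveu branching case). -/
noncomputable def muNeveu (σ : ℝ) : Measure ℝ :=
  (volume.restrict (Set.Ioi (0 : ℝ))).withDensity (fun z => ENNReal.ofReal (σ / z ^ 2))

/-- `LV_log` for the Neveu mechanism with `b = c = 0`, `ν = 0`, immigration
drift `β` and competition mechanism `g`. -/
noncomputable def LVlogNeveu (σ β : ℝ) (g : ℝ → ℝ) (x : ℝ) : ℝ :=
  x * (∫ z in Set.Ioi (0 : ℝ),
      (Real.log (1 + z / (1 + x)) - (z / (1 + x)) * (if z ≤ 1 then 1 else 0)) ∂(muNeveu σ))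
    + (β - g x) / (1 + x)

/-! Put `a = (1 + x)⁻¹`. Against `μ(dz) = σ z⁻² dz` the compensated integrand of `LV_log` has
the explicit primitive `-(1 + a z) log (1 + a z) / z` on `(0, 1]`, and the same plus `a log z` on
`(1, ∞)`; so the jump part contributes `σ x (a - a log a) = σ x (1 + log (1 + x)) / (1 + x)`. The
competition term `σ x log (1 + x)` cancels the logarithm exactly, leaving `(σ x + β) / (1 + x)`,
which is bounded below by `min σ β > 0`; no bound `C₀ - C₁ log (1 + x) → -∞` can then hold. -/

open Set Filter Topology Real

theorem setIntegral_Ioi_muNeveu {σ : ℝ} (hσ : 0 ≤ σ) (f : ℝ → ℝ) :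
    ∫ z in Ioi 0, f z ∂muNeveu σ = σ * ∫ z in Ioi 0, f z / z ^ 2 := by
  rw [muNeveu, setIntegral_withDensity_eq_setIntegral_toReal_smul (by fun_prop)
    (ae_of_all _ fun _ => ENNReal.ofReal_lt_top) _ measurableSet_Ioi,
    Measure.restrict_restrict measurableSet_Ioi, inter_self, ← integral_const_mul]
  refine setIntegral_congr_fun measurableSet_Ioi fun z _ => ?_
  rw [ENNReal.toReal_ofReal (by positivity), smul_eq_mul]
  ring

theorem sub_log_one_add_le_sq {t : ℝ} (ht : 0 ≤ t) : t - log (1 + t) ≤ t ^ 2 := by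
  have hlog := le_log_one_add_of_nonneg ht
  rw [div_le_iff₀ (by positivity)] at hlog
  nlinarith

section

variable {a z : ℝ}

theorem hasDerivAt_log_one_add_mul (h : 0 < 1 + a * z) :
    HasDerivAt (fun z => log (1 + a * z)) (a / (1 + a * z)) z := by
  simpa [div_eq_inv_mul] using
    ((hasDerivAt_id z).const_mul a |>.const_add 1).log h.ne'

theorem hasDerivAt_neg_mul_log_one_add_mul_div (hz : z ≠ 0) (h : 0 < 1 + a * z) :
    HasDerivAt (fun z => -((1 + a * z) * log (1 + a * z)) / z)
      ((log (1 + a * z) - a * z) / z ^ 2) z := by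
  have hu : HasDerivAt (fun z => 1 + a * z) a z := by
    simpa using ((hasDerivAt_id z).const_mul a).const_add 1
  have hnum : HasDerivAt (fun z => -((1 + a * z) * log (1 + a * z)))
      (-(a * log (1 + a * z) + (1 + a * z) * (a / (1 + a * z)))) z :=
    (hu.mul (hasDerivAt_log_one_add_mul h)).neg
  refine (hnum.div (hasDerivAt_id' z) hz).congr_deriv ?_
  field_simp
  ring

theorem hasDerivAt_neg_mul_log_one_add_mul_div_add_log (hz : 0 < z) (h : 0 < 1 + a * z) :
    HasDerivAt (fun z => -((1 + a * z) * log (1 + a * z)) / z + a * log z)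
      (log (1 + a * z) / z ^ 2) z := by
  refine ((hasDerivAt_neg_mul_log_one_add_mul_div hz.ne' h).add
    ((hasDerivAt_log hz.ne').const_mul a)).congr_deriv ?_
  field_simp
  ring

end

theorem tendsto_log_one_add_mul_div_nhdsNE_zero (a : ℝ) :
    Tendsto (fun z => log (1 + a * z) / z) (𝓝[≠] 0) (𝓝 a) := by
  have := hasDerivAt_iff_tendsto_slope_zero.1
    (hasDerivAt_log_one_add_mul (a := a) (z := 0) (by simp))
  simpa [div_eq_inv_mul] using this

theorem tendsto_neg_mul_log_one_add_mul_div_nhdsGT_zero (a : ℝ) :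
    Tendsto (fun z => -((1 + a * z) * log (1 + a * z)) / z) (𝓝[>] 0) (𝓝 (-a)) := by
  have hlin : Tendsto (fun z => 1 + a * z) (𝓝[>] 0) (𝓝 1) := by
    have : Continuous fun z : ℝ => 1 + a * z := by fun_prop
    simpa using (this.tendsto 0).mono_left nhdsWithin_le_nhds
  have hslope := (tendsto_log_one_add_mul_div_nhdsNE_zero a).mono_left
    (nhdsWithin_mono _ fun _ hz => ne_of_gt hz)
  have := (hlin.mul hslope).neg
  rw [one_mul] at this
  exact this.congr fun z => by ring

section

variable {a : ℝ}

theorem tendsto_log_one_add_mul_div_atTop (ha : 0 < a) :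
    Tendsto (fun z => log (1 + a * z) / z) atTop (𝓝 0) := by
  have hlin : Tendsto (fun z => 1 + a * z) atTop atTop :=
    tendsto_atTop_add_const_left _ 1 (tendsto_id.const_mul_atTop ha)
  have hlog : Tendsto (fun t => log t / t) atTop (𝓝 0) := by
    simpa using tendsto_pow_log_div_mul_add_atTop 1 0 1 one_ne_zero
  have hratio : Tendsto (fun z => z⁻¹ + a) atTop (𝓝 (0 + a)) :=
    tendsto_inv_atTop_zero.add_const a
  have := (hlog.comp hlin).mul hratio
  rw [zero_mul] at this
  refine this.congr' ?_
  filter_upwards [eventually_gt_atTop 0] with z hz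
  have : 0 < 1 + a * z := by positivity
  simp only [Function.comp_apply]
  field_simp

theorem tendsto_neg_mul_log_one_add_mul_div_add_log_atTop (ha : 0 < a) :
    Tendsto (fun z => -((1 + a * z) * log (1 + a * z)) / z + a * log z) atTop
      (𝓝 (-(a * log a))) := by
  have hlog : Tendsto (fun z => log (z⁻¹ + a)) atTop (𝓝 (log a)) := by
    have hinv : Tendsto (fun z : ℝ => z⁻¹ + a) atTop (𝓝 a) := by
      simpa using tendsto_inv_atTop_zero.add_const a
    exact (continuousAt_log ha.ne').tendsto.comp hinv
  have := (tendsto_log_one_add_mul_div_atTop ha).neg.sub (hlog.const_mul a)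
  rw [neg_zero, zero_sub] at this
  refine this.congr' ?_
  filter_upwards [eventually_gt_atTop 0] with z hz
  have hsplit : log (1 + a * z) = log z + log (z⁻¹ + a) := by
    rw [← log_mul hz.ne' (by positivity)]
    congr 1
    field_simp
  rw [hsplit]
  field_simp
  ring

theorem integrableOn_Ioc_zero_one_log_one_add_mul_sub_div_sq (ha : 0 ≤ a) :
    IntegrableOn (fun z => (log (1 + a * z) - a * z) / z ^ 2) (Ioc 0 1) := by
  refine IntegrableOn.of_bound measure_Ioc_lt_top
    (by fun_prop : Measurable fun z => (log (1 + a * z) - a * z) / z ^ 2).aestronglyMeasurable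
    (a ^ 2)
    (ae_restrict_of_forall_mem measurableSet_Ioc fun z hz => ?_)
  have hz : 0 < z := hz.1
  have hlog_le : log (1 + a * z) ≤ a * z := by
    linarith [log_le_sub_one_of_pos (x := 1 + a * z) (by positivity)]
  rw [norm_div, norm_pow, Real.norm_eq_abs, Real.norm_eq_abs, abs_of_nonpos (by linarith),
    sq_abs, div_le_iff₀ (by positivity)]
  linarith [sub_log_one_add_le_sq (t := a * z) (by positivity)]

theorem integral_Ioc_zero_one_log_one_add_mul_sub_div_sq (ha : 0 ≤ a) :
    ∫ z in Ioc 0 1, (log (1 + a * z) - a * z) / z ^ 2 = a - (1 + a) * log (1 + a) := by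
  have hderiv : ∀ z ∈ Ioo (0 : ℝ) 1,
      HasDerivAt (fun z => -((1 + a * z) * log (1 + a * z)) / z)
        ((log (1 + a * z) - a * z) / z ^ 2) z := fun z hz =>
    hasDerivAt_neg_mul_log_one_add_mul_div hz.1.ne' (by nlinarith [hz.1])
  have hone : Tendsto (fun z => -((1 + a * z) * log (1 + a * z)) / z) (𝓝[<] 1)
      (𝓝 (-((1 + a) * log (1 + a)))) := by
    simpa using ((hasDerivAt_neg_mul_log_one_add_mul_div (a := a) one_ne_zero
      (by linarith)).continuousAt).tendsto.mono_left nhdsWithin_le_nhds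
  rw [← intervalIntegral.integral_of_le zero_le_one,
    intervalIntegral.integral_eq_sub_of_hasDerivAt_of_tendsto zero_lt_one hderiv
      ((intervalIntegrable_iff_integrableOn_Ioc_of_le zero_le_one).2
        (integrableOn_Ioc_zero_one_log_one_add_mul_sub_div_sq ha))
      (tendsto_neg_mul_log_one_add_mul_div_nhdsGT_zero a) hone]
  ring

theorem hasDerivAt_neg_mul_log_one_add_mul_div_add_log_of_one_le (ha : 0 ≤ a) {z : ℝ}
    (hz : z ∈ Ici 1) :
    HasDerivAt (fun z => -((1 + a * z) * log (1 + a * z)) / z + a * log z)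
      (log (1 + a * z) / z ^ 2) z :=
  have hz₀ : 0 < z := zero_lt_one.trans_le hz
  hasDerivAt_neg_mul_log_one_add_mul_div_add_log hz₀ (by positivity)

theorem log_one_add_mul_div_sq_nonneg (ha : 0 ≤ a) {z : ℝ} (hz : 0 ≤ z) :
    0 ≤ log (1 + a * z) / z ^ 2 :=
  div_nonneg (log_nonneg (by nlinarith)) (sq_nonneg z)

theorem integrableOn_Ioi_one_log_one_add_mul_div_sq (ha : 0 < a) :
    IntegrableOn (fun z => log (1 + a * z) / z ^ 2) (Ioi 1) :=
  integrableOn_Ioi_deriv_of_nonneg'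
    (fun _ => hasDerivAt_neg_mul_log_one_add_mul_div_add_log_of_one_le ha.le)
    (fun _ hz => log_one_add_mul_div_sq_nonneg ha.le (zero_le_one.trans (le_of_lt hz)))
    (tendsto_neg_mul_log_one_add_mul_div_add_log_atTop ha)

theorem integral_Ioi_one_log_one_add_mul_div_sq (ha : 0 < a) :
    ∫ z in Ioi 1, log (1 + a * z) / z ^ 2 = (1 + a) * log (1 + a) - a * log a := by
  rw [integral_Ioi_of_hasDerivAt_of_tendsto'
    (fun _ => hasDerivAt_neg_mul_log_one_add_mul_div_add_log_of_one_le ha.le)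
    (integrableOn_Ioi_one_log_one_add_mul_div_sq ha)
    (tendsto_neg_mul_log_one_add_mul_div_add_log_atTop ha)]
  simp only [mul_one, div_one, log_one, mul_zero, add_zero]
  ring

end

theorem integral_Ioi_zero_log_one_add_div_compensated_div_sq {c : ℝ} (hc : 0 < c) :
    ∫ z in Ioi 0, (log (1 + z / c) - z / c * (if z ≤ 1 then 1 else 0)) / z ^ 2
      = (1 + log c) / c := by
  set f := fun z : ℝ => (log (1 + z / c) - z / c * (if z ≤ 1 then 1 else 0)) / z ^ 2
  have hsmall : EqOn f (fun z => (log (1 + c⁻¹ * z) - c⁻¹ * z) / z ^ 2) (Ioc 0 1) :=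
    fun z hz => by simp [f, if_pos hz.2, div_eq_inv_mul]
  have hlarge : EqOn f (fun z => log (1 + c⁻¹ * z) / z ^ 2) (Ioi 1) :=
    fun z hz => by simp [f, if_neg (not_le.2 (mem_Ioi.1 hz)), div_eq_inv_mul]
  have hc' : 0 < c⁻¹ := inv_pos.2 hc
  rw [← Ioc_union_Ioi_eq_Ioi zero_le_one, setIntegral_union (Ioc_disjoint_Ioi le_rfl)
      measurableSet_Ioi
      ((integrableOn_Ioc_zero_one_log_one_add_mul_sub_div_sq hc'.le).congr_fun hsmall.symm
        measurableSet_Ioc)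
      ((integrableOn_Ioi_one_log_one_add_mul_div_sq hc').congr_fun hlarge.symm
        measurableSet_Ioi),
    setIntegral_congr_fun measurableSet_Ioc hsmall, setIntegral_congr_fun measurableSet_Ioi hlarge,
    integral_Ioc_zero_one_log_one_add_mul_sub_div_sq hc'.le,
    integral_Ioi_one_log_one_add_mul_div_sq hc', log_inv]
  field_simp
  ring

theorem LVlogNeveu_eq {σ : ℝ} (hσ : 0 ≤ σ) (β : ℝ) (g : ℝ → ℝ) {x : ℝ} (hx : 0 ≤ x) :
    LVlogNeveu σ β g x = (σ * x * (1 + log (1 + x)) + β - g x) / (1 + x) := by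
  have hx1 : 0 < 1 + x := by linarith
  rw [LVlogNeveu, setIntegral_Ioi_muNeveu hσ,
    integral_Ioi_zero_log_one_add_div_compensated_div_sq hx1]
  field_simp
  ring

theorem LVlogNeveu_log_competition {σ : ℝ} (hσ : 0 ≤ σ) (β : ℝ) {x : ℝ} (hx : 0 ≤ x) :
    LVlogNeveu σ β (fun t => σ * t * log (1 + t)) x = (σ * x + β) / (1 + x) := by
  rw [LVlogNeveu_eq hσ β _ hx]
  ring

theorem min_le_mul_add_div_one_add (σ β : ℝ) {x : ℝ} (hx : 0 ≤ x) :
    min σ β ≤ (σ * x + β) / (1 + x) := by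
  rw [le_div_iff₀ (by linarith)]
  nlinarith [min_le_left σ β, min_le_right σ β]

theorem not_forall_le_sub_mul_log_one_add {f : ℝ → ℝ} {lam : ℝ} (hlam : 0 < lam)
    (hf : ∀ x, 0 ≤ x → lam ≤ f x) (C₀ : ℝ) {C₁ : ℝ} (hC₁ : 0 < C₁) :
    ¬ ∀ x, 0 ≤ x → f x ≤ C₀ - C₁ * log (1 + x) := by
  intro hle
  set x := exp (C₀ / C₁)
  have hx : 0 ≤ x := (exp_pos _).le
  have hlog : C₀ / C₁ ≤ log (1 + x) := by
    rw [← log_exp (C₀ / C₁)]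
    exact log_le_log (exp_pos _) (by linarith)
  have : C₀ ≤ C₁ * log (1 + x) := by rwa [div_le_iff₀' hC₁] at hlog
  linarith [hle x hx, hf x hx]

theorem Vlog_not_lyapunov_neveu
    (σ β : ℝ) (hσ : 0 < σ) (hβ : 0 < β) :
    (∀ x : ℝ, 0 ≤ x →
        LVlogNeveu σ β (fun t => σ * t * Real.log (1 + t)) x = (σ * x + β) / (1 + x)) ∧
    (∃ lam : ℝ, lam = min σ β ∧ 0 < lam ∧ ∀ x : ℝ, 0 ≤ x →
        lam ≤ LVlogNeveu σ β (fun t => σ * t * Real.log (1 + t)) x) ∧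
    ¬ (∃ C₀ > (0 : ℝ), ∃ C₁ > (0 : ℝ), ∀ x : ℝ, 0 ≤ x →
        LVlogNeveu σ β (fun t => σ * t * Real.log (1 + t)) x
          ≤ C₀ - C₁ * Real.log (1 + x)) := by
  have hformula := fun x (hx : 0 ≤ x) => LVlogNeveu_log_competition hσ.le β hx
  have hlower : ∀ x, 0 ≤ x → min σ β ≤ LVlogNeveu σ β (fun t => σ * t * log (1 + t)) x :=
    fun x hx => (hformula x hx).symm ▸ min_le_mul_add_div_one_add σ β hx
  refine ⟨hformula, ⟨min σ β, rfl, lt_min hσ hβ, hlower⟩, ?_⟩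
  rintro ⟨C₀, -, C₁, hC₁, hle⟩
  exact not_forall_le_sub_mul_log_one_add (lt_min hσ hβ) hlower C₀ hC₁ hle
end

section
/- For every α with 0 < α < 1 and every x ≥ 0: ∫₁^∞ log(1 + z/(1+x)) z^{−1−α} dz = ∫₀^1 [ z/(1+x) − log(1 + z/(1+x)) ] z^{−1−α} dz + π/( α sin(απ) (1+x)^α ) − 1/( (1−α)(1+x) ). -/
/-!
Write `c = 1 + x`. Scaling `z = c t` shows that `∫₀^∞ log(1 + z/c) z^(-1-α) dz` is `c^(-α)` times
its value at `c = 1`, and integrating by parts turns the latter into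
`α⁻¹ ∫₀^∞ t^(-α)/(1+t) dt = π / (α sin(απ))` (a Beta integral, evaluated by Euler's reflection
formula). Splitting the integral over `(0, ∞)` at `1` and integrating `z/c · z^(-1-α)` over `(0, 1]`
exactly gives the identity.
-/

open MeasureTheory Set Real Filter Topology

theorem integral_rpow_mul_one_sub_rpow {a b : ℝ} (ha : 0 < a) (hb : 0 < b) :
    ∫ x in (0:ℝ)..1, x ^ (a - 1) * (1 - x) ^ (b - 1) = Gamma a * Gamma b / Gamma (a + b) := by
  have h := Complex.betaIntegral_eq_Gamma_mul_div a b (by simpa) (by simpa)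
  have hcongr : ∀ x ∈ uIcc (0:ℝ) 1, ((x ^ (a - 1) * (1 - x) ^ (b - 1) : ℝ) : ℂ)
      = (x : ℂ) ^ ((a : ℂ) - 1) * (1 - (x : ℂ)) ^ ((b : ℂ) - 1) := by
    intro x hx
    rw [uIcc_of_le zero_le_one] at hx
    push_cast [Complex.ofReal_cpow hx.1, Complex.ofReal_cpow (sub_nonneg.2 hx.2)]
    rfl
  rw [Complex.betaIntegral, ← intervalIntegral.integral_congr hcongr,
    intervalIntegral.integral_ofReal, ← Complex.ofReal_add, Complex.Gamma_ofReal,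
    Complex.Gamma_ofReal, Complex.Gamma_ofReal] at h
  exact_mod_cast h

theorem image_div_one_sub_Ioo : (fun u : ℝ ↦ u / (1 - u)) '' Ioo 0 1 = Ioi 0 := by
  ext t
  constructor
  · rintro ⟨u, ⟨hu0, hu1⟩, rfl⟩
    exact div_pos hu0 (sub_pos.2 hu1)
  · intro (ht : 0 < t)
    refine ⟨t / (1 + t), ⟨by positivity, (div_lt_one (by positivity)).2 (by linarith)⟩, ?_⟩
    field_simp
    ring

theorem injOn_div_one_sub_Ioo : InjOn (fun u : ℝ ↦ u / (1 - u)) (Ioo 0 1) := by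
  intro u ⟨_, hu⟩ v ⟨_, hv⟩ h
  have := sub_pos.2 hu
  have := sub_pos.2 hv
  field_simp at h
  linarith

/-- The substitution `t = u/(1-u)` turns this into the Beta integral `B(s, 1-s) = Γ(s) Γ(1-s)`. -/
theorem integral_Ioi_rpow_div_one_add {s : ℝ} (hs0 : 0 < s) (hs1 : s < 1) :
    ∫ t in Ioi (0:ℝ), t ^ (s - 1) / (1 + t) = π / sin (π * s) := by
  have hderiv : ∀ u ∈ Ioo (0:ℝ) 1,
      HasDerivWithinAt (fun u : ℝ ↦ u / (1 - u)) (1 / (1 - u) ^ 2) (Ioo 0 1) u := by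
    intro u ⟨_, hu⟩
    have := sub_pos.2 hu
    refine ((hasDerivAt_id u).div ((hasDerivAt_id u).const_sub 1)
      this.ne').hasDerivWithinAt.congr_deriv ?_
    simp only [id]
    ring
  have hbeta : ∫ u in Ioo (0:ℝ) 1, u ^ (s - 1) * (1 - u) ^ ((1 - s) - 1) = π / sin (π * s) := by
    rw [← integral_Ioc_eq_integral_Ioo, ← intervalIntegral.integral_of_le zero_le_one,
      integral_rpow_mul_one_sub_rpow hs0 (sub_pos.2 hs1), add_sub_cancel, Gamma_one, div_one,
      Gamma_mul_Gamma_one_sub]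
  rw [← image_div_one_sub_Ioo, integral_image_eq_integral_abs_deriv_smul measurableSet_Ioo hderiv
    injOn_div_one_sub_Ioo, ← hbeta]
  refine setIntegral_congr_fun measurableSet_Ioo fun u ⟨hu0, hu1⟩ ↦ ?_
  have h1 : 0 < 1 - u := sub_pos.2 hu1
  simp only [smul_eq_mul]
  rw [div_rpow hu0.le h1.le, abs_of_pos (by positivity), show (1:ℝ) - s - 1 = -s by ring,
    rpow_neg h1.le, rpow_sub_one h1.ne']
  field_simp
  ring

theorem log_one_add_le_rpow_div {y ε : ℝ} (hy : 0 ≤ y) (hε0 : 0 < ε) (hε1 : ε ≤ 1) :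
    log (1 + y) ≤ y ^ ε / ε := by
  have h1 : (1 + y) ^ ε ≤ 1 + y ^ ε := by
    simpa using rpow_add_le_add_rpow zero_le_one hy hε0.le hε1
  rw [le_div_iff₀ hε0, mul_comm, ← log_rpow (by positivity)]
  calc log ((1 + y) ^ ε) ≤ log (1 + y ^ ε) := log_le_log (by positivity) h1
    _ ≤ y ^ ε := by linarith [log_le_sub_one_of_pos (show 0 < 1 + y ^ ε by positivity)]

theorem integrableOn_Ioi_of_norm_le_rpow {f : ℝ → ℝ} {a b C₀ C₁ : ℝ}
    (hf : AEStronglyMeasurable f (volume.restrict (Ioi 0))) (ha : -1 < a) (hb : b < -1)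
    (h₀ : ∀ t ∈ Ioc (0:ℝ) 1, ‖f t‖ ≤ C₀ * t ^ a) (h₁ : ∀ t ∈ Ioi (1:ℝ), ‖f t‖ ≤ C₁ * t ^ b) :
    IntegrableOn f (Ioi 0) := by
  rw [← Ioc_union_Ioi_eq_Ioi zero_le_one]
  refine IntegrableOn.union ?_ ?_
  · refine Integrable.mono' ?_ (hf.mono_set Ioc_subset_Ioi_self)
      ((ae_restrict_iff' measurableSet_Ioc).2 (Eventually.of_forall h₀))
    exact ((intervalIntegral.intervalIntegrable_rpow' ha).const_mul C₀).1
  · refine Integrable.mono' ((integrableOn_Ioi_rpow_of_lt hb one_pos).const_mul C₁)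
      (hf.mono_set (Ioi_subset_Ioi zero_le_one))
      ((ae_restrict_iff' measurableSet_Ioi).2 (Eventually.of_forall h₁))

theorem integrableOn_Ioi_rpow_div_one_add {s : ℝ} (hs0 : 0 < s) (hs1 : s < 1) :
    IntegrableOn (fun t : ℝ ↦ t ^ (s - 1) / (1 + t)) (Ioi 0) := by
  refine integrableOn_Ioi_of_norm_le_rpow (C₀ := 1) (C₁ := 1)
    (by fun_prop : Measurable fun t : ℝ ↦ t ^ (s - 1) / (1 + t)).aestronglyMeasurable
    (by linarith : -1 < s - 1) (by linarith : s - 2 < -1) (fun t ⟨ht, _⟩ ↦ ?_) (fun t ht ↦ ?_)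
  · rw [norm_of_nonneg (by positivity), one_mul]
    exact div_le_self (by positivity) (by linarith)
  · have ht : 0 < t := zero_lt_one.trans ht
    rw [norm_of_nonneg (by positivity), one_mul, show s - 2 = (s - 1) + -1 by ring,
      rpow_add ht, rpow_neg_one, ← div_eq_mul_inv]
    exact div_le_div_of_nonneg_left (by positivity) ht (by linarith)

theorem log_one_add_div_div_rpow_le {α c ε z : ℝ} (hc : 0 < c) (hz : 0 < z) (hε0 : 0 < ε)
    (hε1 : ε ≤ 1) :
    log (1 + z / c) / z ^ (1 + α) ≤ (ε * c ^ ε)⁻¹ * z ^ (ε - (1 + α)) := by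
  calc log (1 + z / c) / z ^ (1 + α) ≤ (z / c) ^ ε / ε / z ^ (1 + α) :=
        div_le_div_of_nonneg_right (log_one_add_le_rpow_div (by positivity) hε0 hε1)
          (by positivity)
    _ = (ε * c ^ ε)⁻¹ * z ^ (ε - (1 + α)) := by
        rw [div_rpow hz.le hc.le, rpow_sub hz]
        field_simp

theorem integrableOn_Ioi_log_one_add_div_div_rpow {α c : ℝ} (hα0 : 0 < α) (hα1 : α < 1)
    (hc : 0 < c) :
    IntegrableOn (fun z : ℝ ↦ log (1 + z / c) / z ^ (1 + α)) (Ioi 0) := by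
  have hnorm : ∀ z ∈ Ioi (0:ℝ),
      ‖log (1 + z / c) / z ^ (1 + α)‖ = log (1 + z / c) / z ^ (1 + α) :=
    fun z (hz : 0 < z) ↦ norm_of_nonneg <|
      div_nonneg (log_nonneg (by simp only [le_add_iff_nonneg_right]; positivity)) (by positivity)
  refine integrableOn_Ioi_of_norm_le_rpow
    (C₀ := (1 * c ^ (1:ℝ))⁻¹) (C₁ := (α / 2 * c ^ (α / 2))⁻¹)
    (by fun_prop : Measurable fun z : ℝ ↦ log (1 + z / c) / z ^ (1 + α)).aestronglyMeasurable
    (by linarith : -1 < 1 - (1 + α)) (by linarith : α / 2 - (1 + α) < -1)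
    (fun z hz ↦ ?_) (fun z hz ↦ ?_)
  · rw [hnorm z hz.1]
    exact log_one_add_div_div_rpow_le hc hz.1 one_pos le_rfl
  · have hz : 0 < z := zero_lt_one.trans hz
    rw [hnorm z hz]
    exact log_one_add_div_div_rpow_le hc hz (by positivity) (by linarith)

theorem tendsto_log_one_add_mul_rpow_neg {l : Filter ℝ} {α ε : ℝ} (hε0 : 0 < ε) (hε1 : ε ≤ 1)
    (hl : ∀ᶠ t in l, 0 < t) (h : Tendsto (fun t ↦ t ^ (ε - α)) l (𝓝 0)) :
    Tendsto (fun t ↦ log (1 + t) * t ^ (-α)) l (𝓝 0) := by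
  refine squeeze_zero' ?_ ?_ (by simpa using h.div_const ε)
  · filter_upwards [hl] with t ht
    exact mul_nonneg (log_nonneg (by linarith)) (by positivity)
  · filter_upwards [hl] with t ht
    calc log (1 + t) * t ^ (-α) ≤ t ^ ε / ε * t ^ (-α) := by
          gcongr
          exact log_one_add_le_rpow_div ht.le hε0 hε1
      _ = t ^ (ε - α) / ε := by rw [sub_eq_add_neg, rpow_add ht]; ring

theorem integral_Ioi_log_one_add_div_rpow {α : ℝ} (hα0 : 0 < α) (hα1 : α < 1) :
    ∫ t in Ioi (0:ℝ), log (1 + t) / t ^ (1 + α) = π / (α * sin (α * π)) := by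
  have hu : ∀ t ∈ Ioi (0:ℝ), HasDerivAt (fun t ↦ log (1 + t)) (1 + t)⁻¹ t := fun t (ht : 0 < t) ↦
    by simpa using ((hasDerivAt_id t).const_add 1).log (by positivity)
  have hv : ∀ t ∈ Ioi (0:ℝ), HasDerivAt (fun t ↦ -α⁻¹ * t ^ (-α)) (t ^ (-α - 1)) t :=
    fun t (ht : 0 < t) ↦ by
      refine ((hasDerivAt_rpow_const (p := -α) (Or.inl ht.ne')).const_mul (-α⁻¹)).congr_deriv ?_
      rw [← mul_assoc, neg_mul_neg, inv_mul_cancel₀ hα0.ne', one_mul]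
  have hfg : EqOn (fun t ↦ log (1 + t) / t ^ (1 + α)) (fun t ↦ log (1 + t) * t ^ (-α - 1))
      (Ioi 0) := fun t (ht : 0 < t) ↦ by
    dsimp only
    rw [show -α - 1 = -(1 + α) by ring, rpow_neg ht.le, div_eq_mul_inv]
  have hf'g : EqOn (fun t ↦ -α⁻¹ * (t ^ ((1 - α) - 1) / (1 + t)))
      (fun t ↦ (1 + t)⁻¹ * (-α⁻¹ * t ^ (-α))) (Ioi 0) := fun t _ ↦ by
    dsimp only
    rw [sub_sub_cancel_left]
    ring
  have huv' : IntegrableOn (fun t ↦ log (1 + t) * t ^ (-α - 1)) (Ioi 0) := by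
    refine IntegrableOn.congr_fun ?_ hfg measurableSet_Ioi
    simpa using integrableOn_Ioi_log_one_add_div_div_rpow hα0 hα1 one_pos
  have hu'v : IntegrableOn (fun t ↦ (1 + t)⁻¹ * (-α⁻¹ * t ^ (-α))) (Ioi 0) := by
    refine IntegrableOn.congr_fun ?_ hf'g measurableSet_Ioi
    exact (integrableOn_Ioi_rpow_div_one_add (sub_pos.2 hα1) (by linarith)).const_mul _
  have hlim : ∀ l : Filter ℝ, Tendsto (fun t ↦ log (1 + t) * t ^ (-α)) l (𝓝 0) →
      Tendsto ((fun t ↦ log (1 + t)) * fun t ↦ -α⁻¹ * t ^ (-α)) l (𝓝 0) := fun l h ↦ by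
    convert h.const_mul (-α⁻¹) using 1
    · ext t
      simp only [Pi.mul_apply]
      ring
    · rw [mul_zero]
  have h_zero := tendsto_log_one_add_mul_rpow_neg (l := 𝓝[>] 0) (α := α) one_pos le_rfl
    self_mem_nhdsWithin <| by
      have h := (continuousAt_rpow_const 0 (1 - α) (Or.inr (sub_nonneg.2 hα1.le))).tendsto
      rw [zero_rpow (sub_pos.2 hα1).ne'] at h
      exact h.mono_left nhdsWithin_le_nhds
  have h_infty := tendsto_log_one_add_mul_rpow_neg (α := α) (ε := α / 2) (by positivity)
    (by linarith) (eventually_gt_atTop 0) <| by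
      simpa [show α / 2 - α = -(α / 2) by ring] using
        tendsto_rpow_neg_atTop (by positivity : 0 < α / 2)
  have hparts := integral_Ioi_mul_deriv_eq_deriv_mul hu hv huv' hu'v (hlim _ h_zero)
    (hlim _ h_infty)
  calc ∫ t in Ioi (0:ℝ), log (1 + t) / t ^ (1 + α)
      = ∫ t in Ioi (0:ℝ), log (1 + t) * t ^ (-α - 1) :=
        setIntegral_congr_fun measurableSet_Ioi hfg
    _ = -∫ t in Ioi (0:ℝ), -α⁻¹ * (t ^ ((1 - α) - 1) / (1 + t)) := by
      rw [hparts, setIntegral_congr_fun measurableSet_Ioi hf'g]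
      ring
    _ = α⁻¹ * (π / sin (π * (1 - α))) := by
      rw [integral_const_mul, integral_Ioi_rpow_div_one_add (sub_pos.2 hα1) (by linarith)]
      ring
    _ = π / (α * sin (α * π)) := by
      rw [mul_one_sub, sin_pi_sub, mul_comm π α]
      field_simp

theorem integral_Ioi_log_one_add_div_div_rpow {α c : ℝ} (hα0 : 0 < α) (hα1 : α < 1)
    (hc : 0 < c) :
    ∫ z in Ioi (0:ℝ), log (1 + z / c) / z ^ (1 + α) = π / (α * sin (α * π) * c ^ α) := by
  have h := integral_comp_mul_left_Ioi (fun z ↦ log (1 + z / c) / z ^ (1 + α)) 0 hc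
  have hscale : EqOn (fun t ↦ log (1 + c * t / c) / (c * t) ^ (1 + α))
      (fun t ↦ (c ^ (1 + α))⁻¹ * (log (1 + t) / t ^ (1 + α))) (Ioi 0) := fun t (ht : 0 < t) ↦ by
    dsimp only
    rw [mul_div_cancel_left₀ t hc.ne', mul_rpow hc.le ht.le]
    field_simp
  rw [setIntegral_congr_fun measurableSet_Ioi hscale, integral_const_mul,
    integral_Ioi_log_one_add_div_rpow hα0 hα1, mul_zero, rpow_one_add' hc.le (by linarith),
    eq_inv_smul_iff₀ hc.ne', smul_eq_mul] at h
  rw [← h]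
  field_simp

theorem integral_Ioc_sub_log_one_add_div_div_rpow {α c : ℝ} (hα0 : 0 < α) (hα1 : α < 1)
    (hc : 0 < c) :
    ∫ z in Ioc (0:ℝ) 1, (z / c - log (1 + z / c)) / z ^ (1 + α)
      = 1 / ((1 - α) * c) - ∫ z in Ioc (0:ℝ) 1, log (1 + z / c) / z ^ (1 + α) := by
  have hrpow : ∫ z in Ioc (0:ℝ) 1, z ^ (-α) = 1 / (1 - α) := by
    rw [← intervalIntegral.integral_of_le zero_le_one, integral_rpow (Or.inl (by linarith)),
      one_rpow, zero_rpow (by linarith), neg_add_eq_sub]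
    ring
  have hsplit : EqOn (fun z ↦ (z / c - log (1 + z / c)) / z ^ (1 + α))
      (fun z ↦ z ^ (-α) / c - log (1 + z / c) / z ^ (1 + α)) (Ioc 0 1) := fun z ⟨hz, _⟩ ↦ by
    dsimp only
    rw [sub_div, div_right_comm, rpow_one_add' hz.le (by linarith), rpow_neg hz.le]
    field_simp
  rw [setIntegral_congr_fun measurableSet_Ioc hsplit, integral_sub, integral_div, hrpow]
  · field_simp
  · exact ((intervalIntegral.intervalIntegrable_rpow' (by linarith)).1).div_const c
  · exact (integrableOn_Ioi_log_one_add_div_div_rpow hα0 hα1 hc).mono_set Ioc_subset_Ioi_self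

theorem integral_log_rpow_split
    (α : ℝ) (hα0 : 0 < α) (hα1 : α < 1) (x : ℝ) (hx : 0 ≤ x) :
    ∫ z in Set.Ioi (1 : ℝ), Real.log (1 + z / (1 + x)) / z ^ (1 + α)
      = (∫ z in Set.Ioc (0 : ℝ) 1,
          (z / (1 + x) - Real.log (1 + z / (1 + x))) / z ^ (1 + α))
        + Real.pi / (α * Real.sin (α * Real.pi) * (1 + x) ^ α)
        - 1 / ((1 - α) * (1 + x)) := by
  have hc : 0 < 1 + x := by linarith
  have hint := integrableOn_Ioi_log_one_add_div_div_rpow hα0 hα1 hc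
  have hsplit : ∫ z in Ioi (0:ℝ), log (1 + z / (1 + x)) / z ^ (1 + α)
      = (∫ z in Ioc (0:ℝ) 1, log (1 + z / (1 + x)) / z ^ (1 + α))
        + ∫ z in Ioi (1:ℝ), log (1 + z / (1 + x)) / z ^ (1 + α) := by
    rw [← Ioc_union_Ioi_eq_Ioi zero_le_one]
    exact setIntegral_union (Ioc_disjoint_Ioi le_rfl) measurableSet_Ioi
      (hint.mono_set Ioc_subset_Ioi_self) (hint.mono_set (Ioi_subset_Ioi zero_le_one))
  rw [integral_Ioc_sub_log_one_add_div_div_rpow hα0 hα1 hc]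
  linarith [integral_Ioi_log_one_add_div_div_rpow hα0 hα1 hc]
end

section
/- Let 0 < α < 1, σ > 0, a ∈ ℝ, c ≥ 0, β ≥ 0, let ν be a Borel measure on (0,∞) with ∫₀^∞(1∧z)ν(dz) < ∞ and ∫₁^∞ log(1+z) ν(dz) < ∞, let g : [0,∞) → [0,∞) be a nondecreasing continuous function with g(0) = 0, and take b = a + ασ/((1−α)Γ(1−α)) and μ(dz) = ασ Γ(1−α)^{−1} z^{−1−α} dz in the generator L (this corresponds to the stable branching mechanism Ψ(λ) = aλ + cλ² − σλ^α). If liminf_{x→∞} g(x)/x^{2−α} > σπ/(Γ(1−α) sin(απ)), then V_log(x) = log(1+x) is a Lyapunov function: there exist constants C₀ > 0 and C₁ > 0 such that LV_log(x) ≤ C₀ − C₁ log(1+x) for all x ≥ 0. -/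
open MeasureTheory

/-- The Lévy measure `μ(dz) = ασ Γ(1−α)⁻¹ z^{−1−α} dz` on `(0,∞)`,
corresponding to the stable branching mechanism `Ψ(λ) = aλ + cλ² − σλ^α` with
`0 < α < 1` (for which `b = a + ασ/((1−α)Γ(1−α))`). -/
noncomputable def muStable (α σ : ℝ) : Measure ℝ :=
  (volume.restrict (Set.Ioi (0 : ℝ))).withDensity
    (fun z => ENNReal.ofReal ((α * σ / Real.Gamma (1 - α)) * z ^ (-(1 + α))))

/-!
With `y = 1 + x` and `K = σπ / (Γ(1-α) sin(απ))`, the uncompensated jump integral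
`∫ log (1 + z / y) μ(dz)` converges for `α < 1` and equals `K y^(-α)`: writing
`log (1 + z / y) = ∫₀^z dt / (y + t)` and `1 / (y + t) = ∫₀^∞ e^(-(y + t) s) ds`, Tonelli
reduces it to `Γ(α) Γ(1-α) = π / sin(απ)`. The compensator only lowers the jump integral, so
the jump part of `L V_log` is at most `K x y^(-α) ≤ K + K x^(2-α) / y`. By the liminf hypothesis
`g x ≥ r x^(2-α)` for large `x` with some `r > K`, so jump and competition together are at most
`K - (r - K) x^(1-α) / 2`, and `x^(1-α)` dominates a multiple of `log (1 + x)`. The diffusion term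
is nonpositive, the drift term is at most `β + |a|`, and the immigration term is bounded by
`∫ (1 ∧ z) ν(dz) + ∫₁^∞ log (1 + z) ν(dz)`.
-/

open Real Set Filter

lemma lintegral_rpow_mul_exp_neg_mul_Ioi {p b : ℝ} (hp : 0 < p) (hb : 0 < b) :
    ∫⁻ t in Ioi 0, ENNReal.ofReal (t ^ (p - 1) * exp (-(b * t)))
      = ENNReal.ofReal ((1 / b) ^ p * Gamma p) := by
  have hint : IntegrableOn (fun t : ℝ => t ^ (p - 1) * exp (-(b * t))) (Ioi 0) := by
    simpa using integrableOn_rpow_mul_exp_neg_mul_rpow (by linarith : -1 < p - 1) one_pos hb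
  rw [← integral_rpow_mul_exp_neg_mul_Ioi hp hb, ofReal_integral_eq_lintegral_ofReal hint]
  filter_upwards [ae_restrict_mem measurableSet_Ioi] with t ht
  exact mul_nonneg (rpow_nonneg ht.out.le _) (exp_pos _).le

lemma lintegral_rpow_neg_mul_exp_neg_add_mul_Ioi {α y s : ℝ} (hα1 : α < 1) (hs : 0 < s) :
    ∫⁻ t in Ioi 0, ENNReal.ofReal (t ^ (-α)) * ENNReal.ofReal (exp (-((y + t) * s)))
      = ENNReal.ofReal (Gamma (1 - α)) * ENNReal.ofReal (s ^ (α - 1) * exp (-(y * s))) := by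
  calc _ = ∫⁻ t in Ioi 0, ENNReal.ofReal (exp (-(y * s)))
            * ENNReal.ofReal (t ^ ((1 - α) - 1) * exp (-(s * t))) := by
        refine setLIntegral_congr_fun measurableSet_Ioi fun t ht => ?_
        rw [← ENNReal.ofReal_mul (rpow_nonneg ht.out.le _),
          ← ENNReal.ofReal_mul (exp_pos _).le, sub_sub_cancel_left,
          show -((y + t) * s) = -(y * s) + -(s * t) by ring, exp_add]
        congr 1
        ring
    _ = _ := by
        rw [lintegral_const_mul _ (by fun_prop),
          lintegral_rpow_mul_exp_neg_mul_Ioi (by linarith) hs,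
          ← ENNReal.ofReal_mul (exp_pos _).le,
          ← ENNReal.ofReal_mul (Gamma_pos_of_pos (by linarith)).le,
          one_div, inv_rpow hs.le, ← rpow_neg hs.le, neg_sub]
        congr 1
        ring

lemma lintegral_rpow_neg_mul_inv_add_Ioi {α y : ℝ} (hα0 : 0 < α) (hα1 : α < 1) (hy : 0 < y) :
    ∫⁻ t in Ioi 0, ENNReal.ofReal (t ^ (-α) * (y + t)⁻¹)
      = ENNReal.ofReal (π / sin (α * π) * y ^ (-α)) := by
  have h_inv : ∀ t ∈ Ioi (0 : ℝ), ENNReal.ofReal (t ^ (-α) * (y + t)⁻¹)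
      = ∫⁻ s in Ioi 0, ENNReal.ofReal (t ^ (-α)) * ENNReal.ofReal (exp (-((y + t) * s))) := by
    intro t ht
    have h := lintegral_rpow_mul_exp_neg_mul_Ioi one_pos (by linarith [ht.out] : 0 < y + t)
    simp only [sub_self, rpow_zero, one_mul, rpow_one, Gamma_one, mul_one, one_div] at h
    rw [lintegral_const_mul _ (by fun_prop), h, ENNReal.ofReal_mul (rpow_nonneg ht.out.le _)]
  have h_meas : Measurable (Function.uncurry fun t s : ℝ =>
      ENNReal.ofReal (t ^ (-α)) * ENNReal.ofReal (exp (-((y + t) * s)))) := by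
    fun_prop
  calc ∫⁻ t in Ioi 0, ENNReal.ofReal (t ^ (-α) * (y + t)⁻¹)
      = ∫⁻ t in Ioi 0, ∫⁻ s in Ioi 0,
          ENNReal.ofReal (t ^ (-α)) * ENNReal.ofReal (exp (-((y + t) * s))) :=
        setLIntegral_congr_fun measurableSet_Ioi h_inv
    _ = ∫⁻ s in Ioi 0, ∫⁻ t in Ioi 0,
          ENNReal.ofReal (t ^ (-α)) * ENNReal.ofReal (exp (-((y + t) * s))) :=
        lintegral_lintegral_swap h_meas.aemeasurable
    _ = ∫⁻ s in Ioi 0,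
          ENNReal.ofReal (Gamma (1 - α)) * ENNReal.ofReal (s ^ (α - 1) * exp (-(y * s))) :=
        setLIntegral_congr_fun measurableSet_Ioi fun s hs =>
          lintegral_rpow_neg_mul_exp_neg_add_mul_Ioi hα1 hs
    _ = ENNReal.ofReal (Gamma (1 - α) * ((1 / y) ^ α * Gamma α)) := by
        rw [lintegral_const_mul _ (by fun_prop), lintegral_rpow_mul_exp_neg_mul_Ioi hα0 hy,
          ← ENNReal.ofReal_mul (Gamma_pos_of_pos (by linarith)).le]
    _ = ENNReal.ofReal (π / sin (α * π) * y ^ (-α)) := by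
        rw [mul_comm α π, ← Gamma_mul_Gamma_one_sub, one_div, inv_rpow hy.le, rpow_neg hy.le]
        congr 1
        ring

lemma integral_inv_add_eq_log {y z : ℝ} (hy : 0 < y) (hz : 0 ≤ z) :
    ∫ t in (0 : ℝ)..z, (y + t)⁻¹ = log (1 + z / y) := by
  rw [intervalIntegral.integral_comp_add_left (fun s => s⁻¹), add_zero,
    integral_inv_of_pos hy (by linarith), add_div, div_self hy.ne']

lemma ofReal_log_one_add_div {y z : ℝ} (hy : 0 < y) (hz : 0 ≤ z) :
    ENNReal.ofReal (log (1 + z / y)) = ∫⁻ t in Ioo 0 z, ENNReal.ofReal ((y + t)⁻¹) := by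
  have hcont : ContinuousOn (fun t : ℝ => (y + t)⁻¹) (Icc 0 z) :=
    ContinuousOn.inv₀ (by fun_prop) fun t ht => by linarith [ht.1]
  rw [← integral_inv_add_eq_log hy hz, intervalIntegral.integral_of_le hz,
    integral_Ioc_eq_integral_Ioo,
    ofReal_integral_eq_lintegral_ofReal (hcont.integrableOn_Icc.mono_set Ioo_subset_Icc_self)]
  filter_upwards [ae_restrict_mem measurableSet_Ioo] with t ht
  exact inv_nonneg.2 (by linarith [ht.1])

lemma lintegral_Ioi_rpow_neg_one_sub {α t : ℝ} (hα0 : 0 < α) (ht : 0 < t) :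
    ∫⁻ z in Ioi t, ENNReal.ofReal (z ^ (-(1 + α))) = ENNReal.ofReal (t ^ (-α) / α) := by
  have hlt : -(1 + α) < -1 := by linarith
  rw [← ofReal_integral_eq_lintegral_ofReal (integrableOn_Ioi_rpow_of_lt hlt ht),
    integral_Ioi_rpow_of_lt hlt ht, show -(1 + α) + 1 = -α by ring, neg_div_neg_eq]
  filter_upwards [ae_restrict_mem measurableSet_Ioi] with z hz
  exact rpow_nonneg (ht.trans hz.out).le _

lemma lintegral_log_one_add_div_mul_rpow_Ioi {α y : ℝ} (hα0 : 0 < α) (hα1 : α < 1)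
    (hy : 0 < y) :
    ∫⁻ z in Ioi 0, ENNReal.ofReal (log (1 + z / y) * z ^ (-(1 + α)))
      = ENNReal.ofReal (π / (α * sin (α * π)) * y ^ (-α)) := by
  set F : ℝ → ℝ → ENNReal := fun z t =>
    (Iio z).indicator (fun t => ENNReal.ofReal ((y + t)⁻¹) * ENNReal.ofReal (z ^ (-(1 + α)))) t
  have h_log : ∀ z ∈ Ioi (0 : ℝ),
      ENNReal.ofReal (log (1 + z / y) * z ^ (-(1 + α))) = ∫⁻ t in Ioi 0, F z t := by
    intro z hz
    rw [ENNReal.ofReal_mul (log_nonneg (by linarith [div_pos hz.out hy])),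
      ofReal_log_one_add_div hy hz.out.le, ← lintegral_mul_const _ (by fun_prop),
      lintegral_indicator measurableSet_Iio, Measure.restrict_restrict measurableSet_Iio,
      Iio_inter_Ioi]
  have h_z : ∀ t ∈ Ioi (0 : ℝ),
      ∫⁻ z in Ioi 0, F z t
        = ENNReal.ofReal α⁻¹ * ENNReal.ofReal (t ^ (-α) * (y + t)⁻¹) := by
    intro t ht
    have hF : ∀ z, F z t = (Ioi t).indicator
        (fun z => ENNReal.ofReal ((y + t)⁻¹) * ENNReal.ofReal (z ^ (-(1 + α)))) z := by
      intro z
      simp only [F, indicator_apply, mem_Iio, mem_Ioi]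
    simp_rw [hF]
    rw [lintegral_indicator measurableSet_Ioi, Measure.restrict_restrict measurableSet_Ioi,
      inter_eq_self_of_subset_left (Ioi_subset_Ioi ht.out.le),
      lintegral_const_mul _ (by fun_prop), lintegral_Ioi_rpow_neg_one_sub hα0 ht.out,
      ← ENNReal.ofReal_mul (inv_nonneg.2 (by linarith [ht.out])),
      ← ENNReal.ofReal_mul (inv_nonneg.2 hα0.le)]
    congr 1
    ring
  have h_meas : Measurable (Function.uncurry F) := by
    have : Function.uncurry F = {q : ℝ × ℝ | q.2 < q.1}.indicator
        (fun q => ENNReal.ofReal ((y + q.2)⁻¹) * ENNReal.ofReal (q.1 ^ (-(1 + α)))) := by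
      ext q
      simp only [Function.uncurry, F, indicator_apply, mem_Iio, mem_ofPred_eq]
    rw [this]
    exact (by fun_prop : Measurable _).indicator (measurableSet_lt measurable_snd measurable_fst)
  calc ∫⁻ z in Ioi 0, ENNReal.ofReal (log (1 + z / y) * z ^ (-(1 + α)))
      = ∫⁻ z in Ioi 0, ∫⁻ t in Ioi 0, F z t :=
        setLIntegral_congr_fun measurableSet_Ioi h_log
    _ = ∫⁻ t in Ioi 0, ∫⁻ z in Ioi 0, F z t := lintegral_lintegral_swap h_meas.aemeasurable
    _ = ∫⁻ t in Ioi 0, ENNReal.ofReal α⁻¹ * ENNReal.ofReal (t ^ (-α) * (y + t)⁻¹) :=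
        setLIntegral_congr_fun measurableSet_Ioi h_z
    _ = ENNReal.ofReal (π / (α * sin (α * π)) * y ^ (-α)) := by
        rw [lintegral_const_mul _ (by fun_prop), lintegral_rpow_neg_mul_inv_add_Ioi hα0 hα1 hy,
          ← ENNReal.ofReal_mul (inv_nonneg.2 hα0.le)]
        congr 1
        field_simp

section muStable

variable {α σ : ℝ}

lemma muStable_restrict_Ioi : (muStable α σ).restrict (Ioi 0) = muStable α σ := by
  rw [muStable, restrict_withDensity measurableSet_Ioi,
    Measure.restrict_restrict measurableSet_Ioi, inter_self]

lemma ae_muStable_pos : ∀ᵐ z ∂muStable α σ, 0 < z :=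
  (withDensity_absolutelyContinuous _ _).ae_le (ae_restrict_mem measurableSet_Ioi)

lemma ae_muStable_log_one_add_div_nonneg {y : ℝ} (hy : 0 < y) :
    ∀ᵐ z ∂muStable α σ, 0 ≤ log (1 + z / y) := by
  filter_upwards [ae_muStable_pos] with z hz
  exact log_nonneg (by linarith [div_pos hz hy])

lemma lintegral_log_one_add_div_muStable (hα0 : 0 < α) (hα1 : α < 1) (hσ : 0 < σ) {y : ℝ}
    (hy : 0 < y) :
    ∫⁻ z, ENNReal.ofReal (log (1 + z / y)) ∂muStable α σ
      = ENNReal.ofReal (σ * π / (Gamma (1 - α) * sin (α * π)) * y ^ (-α)) := by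
  have hΓ : 0 < Gamma (1 - α) := Gamma_pos_of_pos (by linarith)
  rw [muStable, lintegral_withDensity_eq_lintegral_mul _ (by fun_prop) (by fun_prop)]
  calc _ = ∫⁻ z in Ioi 0, ENNReal.ofReal (α * σ / Gamma (1 - α))
            * ENNReal.ofReal (log (1 + z / y) * z ^ (-(1 + α))) := by
        refine setLIntegral_congr_fun measurableSet_Ioi fun z hz => ?_
        have hK : 0 ≤ α * σ / Gamma (1 - α) := by positivity
        have hlog : 0 ≤ log (1 + z / y) := log_nonneg (by linarith [div_pos hz.out hy])
        rw [Pi.mul_apply, ENNReal.ofReal_mul hK, ENNReal.ofReal_mul hlog]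
        ring
    _ = _ := by
        rw [lintegral_const_mul _ (by fun_prop),
          lintegral_log_one_add_div_mul_rpow_Ioi hα0 hα1 hy,
          ← ENNReal.ofReal_mul (by positivity)]
        congr 1
        field_simp

lemma integrable_log_one_add_div_muStable (hα0 : 0 < α) (hα1 : α < 1) (hσ : 0 < σ) {y : ℝ}
    (hy : 0 < y) : Integrable (fun z => log (1 + z / y)) (muStable α σ) := by
  refine ⟨(by fun_prop : Measurable fun z : ℝ => log (1 + z / y)).aestronglyMeasurable, ?_⟩
  rw [hasFiniteIntegral_iff_ofReal (ae_muStable_log_one_add_div_nonneg hy),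
    lintegral_log_one_add_div_muStable hα0 hα1 hσ hy]
  exact ENNReal.ofReal_lt_top

lemma integral_log_one_add_div_muStable (hα0 : 0 < α) (hα1 : α < 1) (hσ : 0 < σ) {y : ℝ}
    (hy : 0 < y) : ∫ z, log (1 + z / y) ∂muStable α σ
      = σ * π / (Gamma (1 - α) * sin (α * π)) * y ^ (-α) := by
  have hΓ : 0 < Gamma (1 - α) := Gamma_pos_of_pos (by linarith)
  have hsin : 0 < sin (α * π) :=
    sin_pos_of_pos_of_lt_pi (by positivity) (by nlinarith [pi_pos])
  rw [integral_eq_lintegral_of_nonneg_ae (ae_muStable_log_one_add_div_nonneg hy)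
      (integrable_log_one_add_div_muStable hα0 hα1 hσ hy).aestronglyMeasurable,
    lintegral_log_one_add_div_muStable hα0 hα1 hσ hy, ENNReal.toReal_ofReal (by positivity)]

lemma setIntegral_log_one_add_div_sub_le (hα0 : 0 < α) (hα1 : α < 1) (hσ : 0 < σ) {y : ℝ}
    (hy : 0 < y) :
    ∫ z in Ioi 0, (log (1 + z / y) - z / y * (if z ≤ 1 then 1 else 0)) ∂muStable α σ
      ≤ σ * π / (Gamma (1 - α) * sin (α * π)) * y ^ (-α) := by
  rw [muStable_restrict_Ioi, ← integral_log_one_add_div_muStable hα0 hα1 hσ hy]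
  by_cases hint : Integrable
      (fun z => log (1 + z / y) - z / y * (if z ≤ 1 then 1 else 0)) (muStable α σ)
  · refine integral_mono_ae hint (integrable_log_one_add_div_muStable hα0 hα1 hσ hy) ?_
    filter_upwards [ae_muStable_pos] with z hz
    have : 0 ≤ z / y * (if z ≤ 1 then 1 else 0) := by positivity
    linarith
  · rw [integral_undef hint]
    exact integral_nonneg_of_ae (ae_muStable_log_one_add_div_nonneg hy)

end muStable

lemma setIntegral_log_one_add_div_le_s19 {ν : Measure ℝ} {y : ℝ} (hy : 1 ≤ y)
    (hνloc : ∫⁻ z, ENNReal.ofReal (min 1 z) ∂ν < ⊤)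
    (hνlog : ∫⁻ z in Ioi 1, ENNReal.ofReal (log (1 + z)) ∂ν < ⊤) :
    ∫ z in Ioi 0, log (1 + z / y) ∂ν
      ≤ (∫⁻ z, ENNReal.ofReal (min 1 z) ∂ν
          + ∫⁻ z in Ioi 1, ENNReal.ofReal (log (1 + z)) ∂ν).toReal := by
  have hy0 : 0 < y := by linarith
  have hnonneg : 0 ≤ᵐ[ν.restrict (Ioi 0)] fun z => log (1 + z / y) := by
    filter_upwards [ae_restrict_mem measurableSet_Ioi] with z hz
    exact log_nonneg (by linarith [div_pos hz.out hy0])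
  rw [integral_eq_lintegral_of_nonneg_ae hnonneg
    (by fun_prop : Measurable fun z : ℝ => log (1 + z / y)).aestronglyMeasurable]
  refine ENNReal.toReal_mono (ENNReal.add_lt_top.2 ⟨hνloc, hνlog⟩).ne ?_
  rw [← Ioc_union_Ioi_eq_Ioi zero_le_one,
    lintegral_union measurableSet_Ioi (Ioc_disjoint_Ioi le_rfl)]
  gcongr ?_ + ?_
  · refine (setLIntegral_mono' measurableSet_Ioc fun z hz => ?_).trans
      (setLIntegral_le_lintegral _ _)
    refine ENNReal.ofReal_le_ofReal ?_
    calc log (1 + z / y) ≤ z / y := by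
          linarith [log_le_sub_one_of_pos (by linarith [div_pos hz.1 hy0] : 0 < 1 + z / y)]
      _ ≤ z := div_le_self hz.1.le hy
      _ = min 1 z := (min_eq_right hz.2).symm
  · refine setLIntegral_mono' measurableSet_Ioi fun z hz => ENNReal.ofReal_le_ofReal ?_
    have hz0 : (0 : ℝ) < z := zero_lt_one.trans hz
    exact log_le_log (by linarith [div_pos hz0 hy0])
      (by linarith [div_le_self hz0.le hy])

lemma drift_div_one_add_le {a β D G x : ℝ} (hβ : 0 ≤ β) (hD : 0 ≤ D) (hx : 0 ≤ x) :
    (β - (a + D) * x - G) / (1 + x) ≤ β + |a| - G / (1 + x) := by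
  have hy : 0 < 1 + x := by linarith
  rw [sub_div, sub_le_sub_iff_right, div_le_iff₀ hy]
  nlinarith [neg_abs_le a, abs_nonneg a, mul_nonneg hD hx, mul_nonneg hβ hx]

lemma one_add_rpow_le {p x : ℝ} (hx : 0 ≤ x) (hp0 : 0 ≤ p) (hp1 : p ≤ 1) :
    (1 + x) ^ p ≤ 1 + x ^ p := by
  simpa using rpow_add_le_add_rpow zero_le_one hx hp0 hp1

lemma mul_one_add_rpow_neg_le {α x : ℝ} (hα0 : 0 ≤ α) (hα1 : α ≤ 1) (hx : 0 ≤ x) :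
    x * (1 + x) ^ (-α) ≤ 1 + x ^ (2 - α) / (1 + x) := by
  have hy : 0 < 1 + x := by linarith
  have hsub := one_add_rpow_le hx (by linarith : 0 ≤ 1 - α) (by linarith : 1 - α ≤ 1)
  calc x * (1 + x) ^ (-α) = x / (1 + x) * (1 + x) ^ (1 - α) := by
        rw [sub_eq_add_neg, rpow_add hy, rpow_one]
        field_simp
    _ ≤ x / (1 + x) * (1 + x ^ (1 - α)) := by gcongr
    _ = x / (1 + x) + x ^ (2 - α) / (1 + x) := by
        rw [show 2 - α = 1 + (1 - α) by ring, rpow_add' hx (by linarith), rpow_one]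
        ring
    _ ≤ 1 + x ^ (2 - α) / (1 + x) := by
        gcongr
        rw [div_le_one hy]
        linarith

lemma rpow_one_sub_div_two_le {α x : ℝ} (hx : 1 ≤ x) :
    x ^ (1 - α) / 2 ≤ x ^ (2 - α) / (1 + x) := by
  have hx0 : 0 < x := by linarith
  rw [show 2 - α = 1 + (1 - α) by ring, rpow_add hx0, rpow_one,
    div_le_div_iff₀ two_pos (by linarith)]
  nlinarith [rpow_pos_of_pos hx0 (1 - α)]

lemma mul_log_one_add_le {α x : ℝ} (hα0 : 0 ≤ α) (hα1 : α < 1) (hx : 0 ≤ x) :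
    (1 - α) * log (1 + x) ≤ 1 + x ^ (1 - α) := by
  have hlog := log_le_rpow_div (by linarith : 0 ≤ 1 + x) (by linarith : 0 < 1 - α)
  rw [le_div_iff₀ (by linarith)] at hlog
  have hsub := one_add_rpow_le hx (by linarith : 0 ≤ 1 - α) (by linarith : 1 - α ≤ 1)
  linarith

lemma exists_gt_eventually_mul_rpow_le {K p : ℝ} {g : ℝ → ℝ}
    (h : (K : EReal) < liminf (fun x : ℝ => ((g x / x ^ p : ℝ) : EReal)) atTop) :
    ∃ r, K < r ∧ ∀ᶠ x in atTop, r * x ^ p ≤ g x := by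
  obtain ⟨r, hKr, hr⟩ := EReal.exists_between_coe_real h
  refine ⟨r, EReal.coe_lt_coe_iff.1 hKr, ?_⟩
  filter_upwards [eventually_lt_of_lt_liminf hr, eventually_gt_atTop 0] with x hx hx0
  rw [← le_div_iff₀ (rpow_pos_of_pos hx0 p)]
  exact (EReal.coe_lt_coe_iff.1 hx).le

lemma mul_rpow_neg_sub_div_le {α K r x G : ℝ} (hα0 : 0 ≤ α) (hα1 : α < 1) (hK : 0 ≤ K)
    (hKr : K ≤ r) (hx : 1 ≤ x) (hG : r * x ^ (2 - α) ≤ G) :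
    x * (K * (1 + x) ^ (-α)) - G / (1 + x) ≤ r - (r - K) * (1 - α) / 2 * log (1 + x) := by
  have hx0 : 0 ≤ x := by linarith
  calc x * (K * (1 + x) ^ (-α)) - G / (1 + x)
      ≤ K * (1 + x ^ (2 - α) / (1 + x)) - r * x ^ (2 - α) / (1 + x) := by
        rw [mul_left_comm]
        gcongr
        exact mul_one_add_rpow_neg_le hα0 hα1.le hx0
    _ = K - (r - K) * (x ^ (2 - α) / (1 + x)) := by ring
    _ ≤ K - (r - K) * (x ^ (1 - α) / 2) :=
        sub_le_sub_left (mul_le_mul_of_nonneg_left (rpow_one_sub_div_two_le hx)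
          (sub_nonneg.2 hKr)) K
    _ ≤ r - (r - K) * (1 - α) / 2 * log (1 + x) := by
        have hlog := mul_le_mul_of_nonneg_left (mul_log_one_add_le hα0 hα1 hx0)
          (by linarith : 0 ≤ (r - K) / 2)
        linarith

lemma exists_mul_rpow_neg_sub_div_le {α K r : ℝ} {g : ℝ → ℝ}
    (hα0 : 0 ≤ α) (hα1 : α < 1) (hK : 0 ≤ K) (hKr : K < r)
    (hg_nonneg : ∀ x ∈ Ici (0 : ℝ), 0 ≤ g x)
    (hg : ∀ᶠ x in atTop, r * x ^ (2 - α) ≤ g x) :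
    ∃ C₀ > (0 : ℝ), ∃ C₁ > (0 : ℝ), ∀ x : ℝ, 0 ≤ x →
      x * (K * (1 + x) ^ (-α)) - g x / (1 + x) ≤ C₀ - C₁ * log (1 + x) := by
  obtain ⟨x₁, hx₁⟩ := eventually_atTop.1 (hg.and (eventually_ge_atTop 1))
  have hx₁1 : 1 ≤ x₁ := (hx₁ x₁ le_rfl).2
  have hC₁ : 0 < (r - K) * (1 - α) / 2 := by
    have : 0 < r - K := sub_pos.2 hKr
    have : 0 < 1 - α := sub_pos.2 hα1
    positivity
  have hKx₁ : 0 ≤ K * x₁ := mul_nonneg hK (by linarith)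
  have hlog₁ := mul_nonneg hC₁.le (log_nonneg (by linarith : (1 : ℝ) ≤ 1 + x₁))
  refine ⟨r + K * x₁ + (r - K) * (1 - α) / 2 * log (1 + x₁), by linarith, _, hC₁,
    fun x hx => ?_⟩
  rcases le_or_gt x₁ x with hlarge | hsmall
  · obtain ⟨hgx, hx1⟩ := hx₁ x hlarge
    linarith [mul_rpow_neg_sub_div_le hα0 hα1 hK hKr.le hx1 hgx]
  · have hy : 0 < 1 + x := by linarith
    have hpow : (1 + x) ^ (-α) ≤ 1 :=
      rpow_le_one_of_one_le_of_nonpos (by linarith) (by linarith)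
    have hlog :=
      mul_le_mul_of_nonneg_left (log_le_log hy (by linarith : 1 + x ≤ 1 + x₁)) hC₁.le
    have hgx : 0 ≤ g x / (1 + x) := div_nonneg (hg_nonneg x hx) hy.le
    have : x * (K * (1 + x) ^ (-α)) ≤ K * x₁ := by
      calc x * (K * (1 + x) ^ (-α)) ≤ x * (K * 1) := by gcongr
        _ ≤ K * x₁ := by nlinarith
    linarith

theorem lyapunov_Vlog_stable_general
    (α σ a c β : ℝ) (hα0 : 0 < α) (hα1 : α < 1) (hσ : 0 < σ) (hc : 0 ≤ c) (hβ : 0 ≤ β)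
    (ν : Measure ℝ)
    (hνloc : ∫⁻ z, ENNReal.ofReal (min 1 z) ∂ν < ⊤)
    (hνlog : ∫⁻ z in Set.Ioi (1 : ℝ), ENNReal.ofReal (Real.log (1 + z)) ∂ν < ⊤)
    (g : ℝ → ℝ) (hgnonneg : ∀ x ∈ Set.Ici (0 : ℝ), 0 ≤ g x)
    (hliminf : ((σ * Real.pi / (Real.Gamma (1 - α) * Real.sin (α * Real.pi)) : ℝ) : EReal)
      < Filter.liminf (fun x : ℝ => ((g x / x ^ (2 - α) : ℝ) : EReal)) Filter.atTop) :
    ∃ C₀ > (0 : ℝ), ∃ C₁ > (0 : ℝ), ∀ x : ℝ, 0 ≤ x →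
      -c / (1 + x) ^ 2
          + x * (∫ z in Set.Ioi (0 : ℝ),
              (Real.log (1 + z / (1 + x))
                - (z / (1 + x)) * (if z ≤ 1 then 1 else 0)) ∂(muStable α σ))
          + (β - (a + α * σ / ((1 - α) * Real.Gamma (1 - α))) * x - g x) / (1 + x)
          + (∫ z in Set.Ioi (0 : ℝ), Real.log (1 + z / (1 + x)) ∂ν)
        ≤ C₀ - C₁ * Real.log (1 + x) := by
  have hΓ : 0 < Gamma (1 - α) := Gamma_pos_of_pos (by linarith)
  have hsin : 0 < sin (α * π) := sin_pos_of_pos_of_lt_pi (by positivity) (by nlinarith [pi_pos])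
  obtain ⟨r, hKr, hr⟩ := exists_gt_eventually_mul_rpow_le hliminf
  obtain ⟨C₀, hC₀, C₁, hC₁, hbound⟩ :=
    exists_mul_rpow_neg_sub_div_le hα0.le hα1 (by positivity) hKr hgnonneg hr
  set M := (∫⁻ z, ENNReal.ofReal (min 1 z) ∂ν
    + ∫⁻ z in Ioi 1, ENNReal.ofReal (log (1 + z)) ∂ν).toReal
  refine ⟨C₀ + (β + |a| + M), by positivity, C₁, hC₁, fun x hx => ?_⟩
  have hy : 0 < 1 + x := by linarith
  have hdiffusion : -c / (1 + x) ^ 2 ≤ 0 :=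
    div_nonpos_of_nonpos_of_nonneg (by linarith) (by positivity)
  have hjump := mul_le_mul_of_nonneg_left (setIntegral_log_one_add_div_sub_le hα0 hα1 hσ hy) hx
  have hdrift := drift_div_one_add_le (a := a) (G := g x) hβ
    (by positivity : 0 ≤ α * σ / ((1 - α) * Gamma (1 - α))) hx
  have himmigration := setIntegral_log_one_add_div_le_s19 (by linarith : 1 ≤ 1 + x) hνloc hνlog
  linarith [hbound x hx]

theorem lyapunov_Vlog_stable
    (α σ a c β : ℝ) (hα0 : 0 < α) (hα1 : α < 1) (hσ : 0 < σ) (hc : 0 ≤ c) (hβ : 0 ≤ β)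
    (ν : Measure ℝ) (hνsupp : ν (Set.Iic 0) = 0)
    (hνloc : ∫⁻ z, ENNReal.ofReal (min 1 z) ∂ν < ⊤)
    (hνlog : ∫⁻ z in Set.Ioi (1 : ℝ), ENNReal.ofReal (Real.log (1 + z)) ∂ν < ⊤)
    (g : ℝ → ℝ) (hg0 : g 0 = 0) (hgmono : MonotoneOn g (Set.Ici 0))
    (hgcont : ContinuousOn g (Set.Ici 0)) (hgnonneg : ∀ x ∈ Set.Ici (0 : ℝ), 0 ≤ g x)
    (hliminf : ((σ * Real.pi / (Real.Gamma (1 - α) * Real.sin (α * Real.pi)) : ℝ) : EReal)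
      < Filter.liminf (fun x : ℝ => ((g x / x ^ (2 - α) : ℝ) : EReal)) Filter.atTop) :
    ∃ C₀ > (0 : ℝ), ∃ C₁ > (0 : ℝ), ∀ x : ℝ, 0 ≤ x →
      -c / (1 + x) ^ 2
          + x * (∫ z in Set.Ioi (0 : ℝ),
              (Real.log (1 + z / (1 + x))
                - (z / (1 + x)) * (if z ≤ 1 then 1 else 0)) ∂(muStable α σ))
          + (β - (a + α * σ / ((1 - α) * Real.Gamma (1 - α))) * x - g x) / (1 + x)
          + (∫ z in Set.Ioi (0 : ℝ), Real.log (1 + z / (1 + x)) ∂ν)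
        ≤ C₀ - C₁ * Real.log (1 + x) :=
  lyapunov_Vlog_stable_general α σ a c β hα0 hα1 hσ hc hβ ν hνloc hνlog g hgnonneg hliminf
end
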